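/- arXiv:1709.05163 — 6 statements merged into one kernel-verified Lean document; each statement's English description precedes it below -/
import Mathlib

section
/- For every integer n ≥ 0, t^(2)_n = t^(1)_{n + N/2} + 1, where the addition is in F_2. -/
/-- The geometric sequence of the first type: `t¹ₙ = 1` iff the Legendre symbol of
`Tr(ω^n)` is `-1`, and `0` otherwise (i.e. when the symbol is `0` or `1`). -/
noncomputable def ntuT1 (p : ℕ) [Fact p.Prime] {F : Type} [Field F]
    [Algebra (ZMod p) F] (ω : F) (n : ℕ) : ZMod 2 :=
  if legendreSym p ((Algebra.trace (ZMod p) F (ω ^ n)).val : ℤ) = -1 then 1 else 0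

/-- The geometric sequence of the second type: `t²ₙ = 0` iff the Legendre symbol of
`Tr(ω^n)` is `1`, and `1` otherwise (i.e. when the symbol is `0` or `-1`). -/
noncomputable def ntuT2 (p : ℕ) [Fact p.Prime] {F : Type} [Field F]
    [Algebra (ZMod p) F] (ω : F) (n : ℕ) : ZMod 2 :=
  if legendreSym p ((Algebra.trace (ZMod p) F (ω ^ n)).val : ℤ) = 1 then 0 else 1

/-- Periodic cross-correlation at shift `τ` of two `N`-periodic binary sequences:
`R_{s,s'}(τ) = Σ_{i=0}^{N-1} (-1)^{s_i + s'_{i+τ}}`, indices taken modulo `N`. -/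
def pcorr (N : ℕ) (s s' : ℕ → ZMod 2) (τ : ℤ) : ℤ :=
  ∑ i ∈ Finset.range N, (-1 : ℤ) ^ ((s i + s' ((((i : ℤ) + τ) % (N : ℤ)).toNat)).val)

/-- The interleaved sequence of `t` and the left shift by `e` of `u`:
`n = 2j ↦ t j`, `n = 2j+1 ↦ u (j + e)`. -/
def ntuInterleave (t u : ℕ → ZMod 2) (e : ℕ) (n : ℕ) : ZMod 2 :=
  if n % 2 = 0 then t (n / 2) else u (n / 2 + e)

/-- An element of an `F_p`-algebra field fixed by the Frobenius `x ↦ x^p` lies in the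
prime field. -/
lemma aux_mem_range {p : ℕ} [Fact p.Prime] {F : Type} [Field F] [Algebra (ZMod p) F]
    (x : F) (hx : x ^ p = x) : ∃ a : ZMod p, algebraMap (ZMod p) F a = x := by
  classical
  set f := algebraMap (ZMod p) F with hf
  have hinj : Function.Injective f := f.injective
  have hp1 : 1 < p := (Fact.out : p.Prime).one_lt
  set P : Polynomial F := Polynomial.X ^ p - Polynomial.X with hP
  have hP0 : P ≠ 0 := FiniteField.X_pow_card_sub_X_ne_zero F hp1
  have hPdeg : P.natDegree = p := FiniteField.X_pow_card_sub_X_natDegree_eq F hp1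
  set S : Finset F := Finset.univ.image f with hS
  have hsub : S ⊆ P.roots.toFinset := by
    intro y hy
    obtain ⟨b, _, rfl⟩ := Finset.mem_image.mp hy
    rw [Multiset.mem_toFinset, Polynomial.mem_roots hP0]
    simp [hP, Polynomial.IsRoot, ← map_pow, ZMod.pow_card]
  have hcardS : S.card = p := by
    rw [hS, Finset.card_image_of_injective _ hinj, Finset.card_univ, ZMod.card]
  have hcardT : P.roots.toFinset.card ≤ p :=
    le_trans (Multiset.toFinset_card_le _) (le_trans (Polynomial.card_roots' P) hPdeg.le)
  have heq : S = P.roots.toFinset :=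
    Finset.eq_of_subset_of_card_le hsub (by omega)
  have hxroot : x ∈ P.roots.toFinset := by
    rw [Multiset.mem_toFinset, Polynomial.mem_roots hP0]
    simp [hP, Polynomial.IsRoot, hx]
  rw [← heq] at hxroot
  obtain ⟨a, _, ha⟩ := Finset.mem_image.mp hxroot
  exact ⟨a, ha⟩

theorem stmt0 (p m : ℕ) [Fact p.Prime] (hp2 : p ≠ 2) (hm : 1 < m)
    (F : Type) [Field F] [Fintype F] [Algebra (ZMod p) F]
    (hcard : Fintype.card F = p ^ m) (ω : F) (hω : orderOf ω = p ^ m - 1)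
    (N : ℕ) (hN : N = 2 * (p ^ m - 1) / (p - 1)) (n : ℕ) :
    ntuT2 p ω n = ntuT1 p ω (n + N / 2) + 1 := by
  have hp : p.Prime := Fact.out
  obtain ⟨s, hs⟩ := hp.odd_of_ne_two hp2
  have hp3 : 3 ≤ p := by
    have := hp.two_le; omega
  have hq1 : 1 < p ^ m := Nat.one_lt_pow (by omega) hp.one_lt
  set k := (p ^ m - 1) / (p - 1) with hk
  have hdvd : (p - 1) ∣ (p ^ m - 1) := by
    simpa using Nat.sub_dvd_pow_sub_pow p 1 m
  have hkmul : (p - 1) * k = p ^ m - 1 := Nat.mul_div_cancel' hdvd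
  have hk0 : k ≠ 0 := by
    intro h; rw [h, mul_zero] at hkmul; omega
  have hN2 : N / 2 = k := by
    rw [hN, Nat.mul_div_assoc 2 hdvd, ← hk]
    omega
  set c := ω ^ k with hc
  have hordc : orderOf c = p - 1 := by
    rw [hc, orderOf_pow' ω hk0, hω, Nat.gcd_eq_right ⟨p - 1, hkmul.symm.trans (mul_comm _ _)⟩, ← hkmul,
      Nat.mul_div_cancel _ (Nat.pos_of_ne_zero hk0)]
  have hc_pow : c ^ (p - 1) = 1 := by
    rw [← hordc]; exact pow_orderOf_eq_one c
  have hc0 : c ≠ 0 := by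
    intro h
    rw [h, zero_pow (by omega : p - 1 ≠ 0)] at hc_pow
    exact zero_ne_one hc_pow
  have hcp : c ^ p = c := by
    have h1 : c ^ p = c ^ (p - 1) * c := by
      rw [← pow_succ]; congr 1; omega
    rw [h1, hc_pow, one_mul]
  obtain ⟨a, ha⟩ := aux_mem_range c hcp
  have ha0 : a ≠ 0 := by
    rintro rfl
    rw [map_zero] at ha
    exact hc0 ha.symm
  -- `a` is a nonsquare in `ZMod p`
  have hnsq : ¬ IsSquare a := by
    rintro ⟨b, rfl⟩
    have hb0 : b ≠ 0 := by
      intro h; rw [h, mul_zero] at ha0; exact ha0 rfl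
    have h1 : (b * b) ^ ((p - 1) / 2) = 1 := by
      rw [← sq, ← pow_mul, (by omega : 2 * ((p - 1) / 2) = p - 1)]
      exact ZMod.pow_card_sub_one_eq_one hb0
    have h2 : c ^ ((p - 1) / 2) = 1 := by
      rw [← ha, ← map_pow, h1, map_one]
    have h3 : orderOf c ∣ (p - 1) / 2 := orderOf_dvd_of_pow_eq_one h2
    rw [hordc] at h3
    have := Nat.le_of_dvd (by omega) h3
    omega
  have hχa : quadraticChar (ZMod p) a = -1 :=
    quadraticChar_neg_one_iff_not_isSquare.mpr hnsq
  -- the trace identity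
  have htr : Algebra.trace (ZMod p) F (ω ^ (n + N / 2))
      = a * Algebra.trace (ZMod p) F (ω ^ n) := by
    rw [hN2, pow_add, ← hc, ← ha, mul_comm, ← Algebra.smul_def, map_smul, smul_eq_mul]
  -- reduce Legendre symbols to quadratic characters
  have hleg : ∀ x : ZMod p, legendreSym p ((x.val : ℤ)) = quadraticChar (ZMod p) x := by
    intro x
    unfold legendreSym
    congr 1
    push_cast
    simp [ZMod.natCast_val, ZMod.cast_id]
  set t := Algebra.trace (ZMod p) F (ω ^ n) with ht
  unfold ntuT1 ntuT2
  rw [htr, hleg, hleg, ← ht, map_mul, hχa]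
  by_cases h0 : t = 0
  · simp [h0]
  · rcases quadraticChar_dichotomy h0 with h | h <;> rw [h] <;> norm_num <;> decide
end

section
/- For every integer n ≥ 0, (Tr(ω^{n + N/2})/p) = −(Tr(ω^n)/p); in particular, Tr(ω^{n + N/2}) = 0 if and only if Tr(ω^n) = 0. -/
theorem stmt1 (p m : ℕ) [Fact p.Prime] (hp2 : p ≠ 2) (hm : 1 < m)
    (F : Type) [Field F] [Fintype F] [Algebra (ZMod p) F]
    (hcard : Fintype.card F = p ^ m) (ω : F) (hω : orderOf ω = p ^ m - 1)
    (N : ℕ) (hN : N = 2 * (p ^ m - 1) / (p - 1)) (n : ℕ) :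
    legendreSym p ((Algebra.trace (ZMod p) F (ω ^ (n + N / 2))).val : ℤ)
      = - legendreSym p ((Algebra.trace (ZMod p) F (ω ^ n)).val : ℤ)
    ∧ (Algebra.trace (ZMod p) F (ω ^ (n + N / 2)) = 0
        ↔ Algebra.trace (ZMod p) F (ω ^ n) = 0) := by
  classical
  have hp : p.Prime := Fact.out
  have hp1 : 1 < p := hp.one_lt
  have hodd : Odd p := hp.odd_of_ne_two hp2
  have hdvd : (p - 1) ∣ (p ^ m - 1) := by
    simpa using Nat.sub_dvd_pow_sub_pow p 1 m
  set k : ℕ := (p ^ m - 1) / (p - 1) with hk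
  have hkmul : k * (p - 1) = p ^ m - 1 := Nat.div_mul_cancel hdvd
  have hpm1 : 0 < p ^ m - 1 := by
    have : p ≤ p ^ m := Nat.le_self_pow (by omega) p
    have : 2 < p ^ m := by omega
    omega
  have hk0 : 0 < k := by
    rcases Nat.eq_zero_or_pos k with h | h
    · rw [h] at hkmul; omega
    · exact h
  have hN2 : N / 2 = k := by
    rw [hN, Nat.mul_div_assoc 2 hdvd, Nat.mul_div_cancel_left _ two_pos]
  -- c := ω ^ k lies in the prime field
  set c : F := ω ^ k with hc
  have hcp1 : c ^ (p - 1) = 1 := by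
    rw [hc, ← pow_mul, hkmul, ← hω, pow_orderOf_eq_one]
  have hcp : c ^ p = c := by
    have : c ^ p = c ^ (p - 1) * c := by
      rw [← pow_succ]; congr 1; omega
    rw [this, hcp1, one_mul]
  obtain ⟨a, ha⟩ : ∃ a : ZMod p, algebraMap (ZMod p) F a = c := by
    set f : Polynomial F := Polynomial.X ^ p - Polynomial.X with hf
    have hfne : f ≠ 0 := FiniteField.X_pow_card_sub_X_ne_zero F hp1
    set S : Finset F := Finset.univ.image (algebraMap (ZMod p) F) with hS
    have hinj : Function.Injective (algebraMap (ZMod p) F) :=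
      (algebraMap (ZMod p) F).injective
    have hScard : S.card = p := by
      rw [hS, Finset.card_image_of_injective _ hinj, Finset.card_univ, ZMod.card]
    have hsub : S ⊆ f.roots.toFinset := by
      intro x hx
      rw [hS, Finset.mem_image] at hx
      obtain ⟨b, -, rfl⟩ := hx
      rw [Multiset.mem_toFinset, Polynomial.mem_roots hfne]
      simp only [hf, Polynomial.IsRoot, Polynomial.eval_sub, Polynomial.eval_pow,
        Polynomial.eval_X]
      rw [← map_pow, ZMod.pow_card, sub_self]
    have hrcard : f.roots.toFinset.card ≤ p := by
      calc f.roots.toFinset.card ≤ Multiset.card f.roots := f.roots.toFinset_card_le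
        _ ≤ f.natDegree := f.card_roots'
        _ = p := FiniteField.X_pow_card_sub_X_natDegree_eq F hp1
    have hSeq : S = f.roots.toFinset :=
      Finset.eq_of_subset_of_card_le hsub (by omega)
    have hcmem : c ∈ f.roots.toFinset := by
      rw [Multiset.mem_toFinset, Polynomial.mem_roots hfne]
      simp only [hf, Polynomial.IsRoot, Polynomial.eval_sub, Polynomial.eval_pow,
        Polynomial.eval_X]
      rw [hcp, sub_self]
    rw [← hSeq, hS, Finset.mem_image] at hcmem
    obtain ⟨a, -, ha⟩ := hcmem
    exact ⟨a, ha⟩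
  have hinj : Function.Injective (algebraMap (ZMod p) F) :=
    (algebraMap (ZMod p) F).injective
  -- a has order p - 1
  have hordc : orderOf c = p - 1 := by
    rw [hc, orderOf_pow' ω (by omega : k ≠ 0), hω]
    have : Nat.gcd (p ^ m - 1) k = k := Nat.gcd_eq_right ⟨p - 1, hkmul.symm⟩
    rw [this, ← hkmul, Nat.mul_div_cancel_left _ hk0]
  have horda : orderOf a = p - 1 := by
    rw [← hordc, ← ha]
    exact (orderOf_injective (algebraMap (ZMod p) F).toMonoidHom hinj a).symm
  have ha0 : a ≠ 0 := by
    intro h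
    rw [h, map_zero] at ha
    rw [← ha, zero_pow (by omega : p - 1 ≠ 0)] at hcp1
    exact zero_ne_one hcp1
  -- a is not a square
  have hnsq : ¬ IsSquare a := by
    rintro ⟨b, rfl⟩
    have hb0 : b ≠ 0 := by
      intro h; exact ha0 (by rw [h, mul_zero])
    have hb : b ^ (p - 1) = 1 := ZMod.pow_card_sub_one_eq_one hb0
    have h2 : 2 * ((p - 1) / 2) = p - 1 := by
      obtain ⟨t, ht⟩ := hodd; omega
    have : (b * b) ^ ((p - 1) / 2) = 1 := by
      rw [← sq, ← pow_mul, h2, hb]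
    have hdvd2 : orderOf (b * b) ∣ (p - 1) / 2 := orderOf_dvd_of_pow_eq_one this
    rw [horda] at hdvd2
    have := Nat.le_of_dvd (by omega) hdvd2
    omega
  have hqc : quadraticChar (ZMod p) a = -1 :=
    quadraticChar_neg_one_iff_not_isSquare.mpr hnsq
  -- trace identity
  set t : ZMod p := Algebra.trace (ZMod p) F (ω ^ n) with ht
  have htr : Algebra.trace (ZMod p) F (ω ^ (n + N / 2)) = a * t := by
    rw [hN2, pow_add, ← hc, ← ha, mul_comm, ← Algebra.smul_def, map_smul, smul_eq_mul, ht]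
  have hleg : ∀ x : ZMod p, legendreSym p ((x.val : ℤ)) = quadraticChar (ZMod p) x := by
    intro x
    unfold legendreSym
    congr 1
    push_cast [ZMod.natCast_val, ZMod.cast_id]
    rfl
  constructor
  · rw [htr, hleg, hleg, map_mul, hqc, neg_one_mul]
  · rw [htr]
    constructor
    · intro h
      rcases mul_eq_zero.mp h with h' | h'
      · exact absurd h' ha0
      · exact h'
    · intro h; rw [h, mul_zero]
end

section
/- For every integer τ with 0 ≤ τ ≤ N − 1, R_{T^(2)}(τ) = R_{T^(1)}(τ); that is, T^(2) has the same periodic autocorrelation as T^(1). -/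
/-!
Write `χ n` for the quadratic character of `Tr(ω ^ n)` and let `d = (p ^ m - 1) / (p - 1)`.
Then `ω ^ d` is the norm of `ω`, which generates `F_p^×` and so is a non-square; as the trace
is `F_p`-linear, `χ (n + d) = - χ n`. Hence `t²ₙ = t¹ₙ₊d + 1`: `T²` is the complement of
a cyclic shift of `T¹`, and periodic correlation is invariant under both operations.
-/

open Finset Function

theorem Function.Periodic.sum_range_add_one {M : Type*} [AddCommMonoid M] {f : ℕ → M} {N : ℕ}
    (hf : Periodic f N) : ∑ i ∈ range N, f (i + 1) = ∑ i ∈ range N, f i := by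
  cases N with
  | zero => rfl
  | succ n => rw [sum_range_succ, sum_range_succ' f, ← zero_add (n + 1), hf 0]

theorem Function.Periodic.sum_range_add {M : Type*} [AddCommMonoid M] {f : ℕ → M} {N : ℕ}
    (hf : Periodic f N) (k : ℕ) : ∑ i ∈ range N, f (i + k) = ∑ i ∈ range N, f i := by
  induction k generalizing f with
  | zero => rfl
  | succ k ih =>
    simp only [← add_assoc]
    exact (ih (hf.add_const 1)).trans hf.sum_range_add_one

theorem Function.Periodic.eq_of_intModEq {α : Type*} {f : ℕ → α} {N : ℕ} (hf : Periodic f N)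
    {a b : ℕ} (h : (a : ℤ) ≡ b [ZMOD N]) : f a = f b := by
  rw [← hf.map_mod_nat a, Int.natCast_modEq_iff.mp h, hf.map_mod_nat]

lemma pcorr_add_one (N : ℕ) (s s' : ℕ → ZMod 2) (τ : ℤ) :
    pcorr N (fun n => s n + 1) (fun n => s' n + 1) τ = pcorr N s s' τ := by
  unfold pcorr
  congr! 3 with i
  have h : ∀ x y : ZMod 2, x + 1 + (y + 1) = x + y := by decide
  rw [h]

lemma pcorr_comp_add {N : ℕ} {s s' : ℕ → ZMod 2} (hs : Periodic s N) (hs' : Periodic s' N)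
    (k : ℕ) (τ : ℤ) :
    pcorr N (fun n => s (n + k)) (fun n => s' (n + k)) τ = pcorr N s s' τ := by
  obtain rfl | hN := N.eq_zero_or_pos
  · rfl
  have hN' : (N : ℤ) ≠ 0 := by exact_mod_cast hN.ne'
  have hperiodic :
      Periodic (fun i : ℕ => (-1 : ℤ) ^ ((s i + s' ((((i : ℤ) + τ) % N).toNat)).val)) N := by
    intro i
    simp only [hs i, Nat.cast_add, add_right_comm _ (N : ℤ), Int.add_emod_right]
  unfold pcorr
  rw [← hperiodic.sum_range_add k]
  refine sum_congr rfl fun i _ => ?_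
  congr 3
  apply hs'.eq_of_intModEq
  rw [Nat.cast_add, Int.toNat_of_nonneg (Int.emod_nonneg _ hN'),
    Int.toNat_of_nonneg (Int.emod_nonneg _ hN')]
  calc ((i : ℤ) + τ) % N + k ≡ i + τ + k [ZMOD N] := (Int.mod_modEq _ _).add_right _
    _ = (i + k : ℕ) + τ := by push_cast; ring
    _ ≡ ((i + k : ℕ) + τ) % N [ZMOD N] := (Int.mod_modEq _ _).symm

section TraceSymbol

variable (p : ℕ) [Fact p.Prime] {F : Type} [Field F] [Algebra (ZMod p) F]

noncomputable def traceSymbol (ω : F) (n : ℕ) : ℤ :=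
  quadraticChar (ZMod p) (Algebra.trace (ZMod p) F (ω ^ n))

lemma legendreSym_natCast_val (x : ZMod p) :
    legendreSym p (x.val : ℤ) = quadraticChar (ZMod p) x := by
  rw [legendreSym, Int.cast_natCast, ZMod.natCast_zmod_val]

lemma ntuT1_eq_ite (ω : F) (n : ℕ) :
    ntuT1 p ω n = if traceSymbol p ω n = -1 then 1 else 0 := by
  rw [ntuT1, legendreSym_natCast_val, traceSymbol]

lemma ntuT2_eq_ite (ω : F) (n : ℕ) :
    ntuT2 p ω n = if traceSymbol p ω n = 1 then 0 else 1 := by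
  rw [ntuT2, legendreSym_natCast_val, traceSymbol]

variable {p}

lemma ntuT1_periodic {ω : F} {d : ℕ} (h : Antiperiodic (traceSymbol p ω) d) :
    Periodic (ntuT1 p ω) (2 * d) := by
  intro n
  simp only [ntuT1_eq_ite, h.periodic_two_mul n]

lemma ntuT2_eq_ntuT1_add_one {ω : F} {d : ℕ} (h : Antiperiodic (traceSymbol p ω) d) (n : ℕ) :
    ntuT2 p ω n = ntuT1 p ω (n + d) + 1 := by
  simp only [ntuT2_eq_ite, ntuT1_eq_ite, h n, neg_inj]
  split_ifs <;> decide

end TraceSymbol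

section Norm

variable {p m : ℕ} [Fact p.Prime] {F : Type} [Field F] [Fintype F] [Algebra (ZMod p) F]

lemma algebraMap_norm_eq_pow (hcard : Fintype.card F = p ^ m) (x : F) :
    algebraMap (ZMod p) F (Algebra.norm (ZMod p) x) = x ^ ((p ^ m - 1) / (p - 1)) := by
  rw [FiniteField.algebraMap_norm_eq_pow, Nat.card_eq_fintype_card, hcard, Nat.card_zmod]

lemma not_isSquare_norm_of_orderOf (hp2 : p ≠ 2) (hm : 0 < m) (hcard : Fintype.card F = p ^ m)
    {ω : F} (hω : orderOf ω = p ^ m - 1) : ¬IsSquare (Algebra.norm (ZMod p) ω) := by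
  set d := (p ^ m - 1) / (p - 1)
  have hp : 3 ≤ p := (Fact.out : p.Prime).two_le.lt_of_ne' hp2
  have hpm : p ≤ p ^ m := Nat.le_self_pow hm.ne' p
  have hd : d * (p - 1) = p ^ m - 1 := Nat.div_mul_cancel (Nat.sub_one_dvd_pow_sub_one p m)
  have hd0 : 0 < d := Nat.div_pos (by omega) (by omega)
  have hω0 : ω ≠ 0 := by
    rintro rfl
    rw [orderOf_zero] at hω
    omega
  have hnorm0 : Algebra.norm (ZMod p) ω ≠ 0 := Algebra.norm_ne_zero_iff.mpr hω0
  rw [ZMod.euler_criterion p hnorm0]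
  intro hsq
  have hone : ω ^ (d * (p / 2)) = 1 := by
    rw [pow_mul, ← algebraMap_norm_eq_pow hcard, ← map_pow, hsq, map_one]
  refine pow_ne_one_of_lt_orderOf (Nat.mul_ne_zero hd0.ne' (by omega)) ?_ hone
  rw [hω, ← hd]
  exact Nat.mul_lt_mul_of_pos_left (by omega) hd0

lemma traceSymbol_antiperiodic (hp2 : p ≠ 2) (hm : 0 < m) (hcard : Fintype.card F = p ^ m)
    {ω : F} (hω : orderOf ω = p ^ m - 1) :
    Antiperiodic (traceSymbol p ω) ((p ^ m - 1) / (p - 1)) := by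
  intro n
  have hflip : ω ^ (n + (p ^ m - 1) / (p - 1)) = Algebra.norm (ZMod p) ω • ω ^ n := by
    rw [Algebra.smul_def, algebraMap_norm_eq_pow hcard, pow_add, mul_comm]
  rw [traceSymbol, traceSymbol, hflip, map_smul, smul_eq_mul, map_mul,
    quadraticChar_neg_one_iff_not_isSquare.mpr (not_isSquare_norm_of_orderOf hp2 hm hcard hω),
    neg_one_mul]

end Norm

theorem stmt2_general (p m : ℕ) [Fact p.Prime] (hp2 : p ≠ 2) (hm : 1 < m)
    (F : Type) [Field F] [Fintype F] [Algebra (ZMod p) F]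
    (hcard : Fintype.card F = p ^ m) (ω : F) (hω : orderOf ω = p ^ m - 1)
    (N : ℕ) (hN : N = 2 * (p ^ m - 1) / (p - 1)) (τ : ℤ) :
    pcorr N (ntuT2 p ω) (ntuT2 p ω) τ = pcorr N (ntuT1 p ω) (ntuT1 p ω) τ := by
  have hanti := traceSymbol_antiperiodic hp2 (by omega) hcard hω
  have hN2 : N = 2 * ((p ^ m - 1) / (p - 1)) := by
    rw [hN, Nat.mul_div_assoc 2 (Nat.sub_one_dvd_pow_sub_one p m)]
  have hT2 : ntuT2 p ω = fun n => ntuT1 p ω (n + (p ^ m - 1) / (p - 1)) + 1 :=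
    funext (ntuT2_eq_ntuT1_add_one hanti)
  rw [hT2, pcorr_add_one, hN2, pcorr_comp_add (ntuT1_periodic hanti) (ntuT1_periodic hanti)]

theorem stmt2 (p m : ℕ) [Fact p.Prime] (hp2 : p ≠ 2) (hm : 1 < m)
    (F : Type) [Field F] [Fintype F] [Algebra (ZMod p) F]
    (hcard : Fintype.card F = p ^ m) (ω : F) (hω : orderOf ω = p ^ m - 1)
    (N : ℕ) (hN : N = 2 * (p ^ m - 1) / (p - 1)) (τ : ℤ) (hτ0 : 0 ≤ τ) (hτ1 : τ ≤ (N : ℤ) - 1) :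
    pcorr N (ntuT2 p ω) (ntuT2 p ω) τ = pcorr N (ntuT1 p ω) (ntuT1 p ω) τ :=
  stmt2_general p m hp2 hm F hcard ω hω N hN τ
end

section
/- Let e1, e2 ∈ {0, 1, …, N−1}. For every odd shift τ = 2τ0 + 1 with τ0 an integer, the periodic cross-correlation of the interleaved sequences satisfies R_{S^{e1},S^{e2}}(2τ0 + 1) = −R_{T^(1)}(e2 + τ0 + N/2) − R_{T^(1)}(e1 − τ0 − 1 + N/2), where R_{T^(1)} is extended N-periodically to all integer arguments. -/
/-- Splitting a sum over `range (2 * n)` into even and odd indices. -/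
lemma ntu5_sum_interleave (f : ℕ → ℤ) (n : ℕ) :
    ∑ i ∈ Finset.range (2 * n), f i
      = ∑ j ∈ Finset.range n, f (2 * j) + ∑ j ∈ Finset.range n, f (2 * j + 1) := by
  induction n with
  | zero => simp
  | succ n ih =>
    rw [show 2 * (n + 1) = (2 * n + 1) + 1 by ring, Finset.sum_range_succ, Finset.sum_range_succ,
      ih, Finset.sum_range_succ, Finset.sum_range_succ (fun j => f (2 * j + 1))]
    ring

/-- Fixed points of the Frobenius lie in the prime field. -/
lemma ntu5_mem_primeField (p : ℕ) [Fact p.Prime] {F : Type} [Field F]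
    [Algebra (ZMod p) F] (γ : F) (hγ : γ ^ p = γ) :
    ∃ c : ZMod p, algebraMap (ZMod p) F c = γ := by
  classical
  have hp : p.Prime := Fact.out
  have hp1 : 1 < p := hp.one_lt
  have hinj : Function.Injective (algebraMap (ZMod p) F) := (algebraMap (ZMod p) F).injective
  by_contra hcon
  push_neg at hcon
  set s : Finset F := Finset.univ.image (algebraMap (ZMod p) F) with hs
  have hγs : γ ∉ s := by
    intro h
    obtain ⟨c, -, hc⟩ := Finset.mem_image.mp h
    exact hcon c hc
  have hroot : ∀ x ∈ insert γ s, (Polynomial.X ^ p - Polynomial.X : Polynomial F).IsRoot x := by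
    intro x hx
    rcases Finset.mem_insert.mp hx with rfl | hx
    · simp [Polynomial.IsRoot, hγ]
    · obtain ⟨c, -, rfl⟩ := Finset.mem_image.mp hx
      simp only [Polynomial.IsRoot, Polynomial.eval_sub, Polynomial.eval_pow, Polynomial.eval_X]
      rw [← map_pow, ZMod.pow_card, sub_self]
  have hsub : (insert γ s).val ⊆ (Polynomial.X ^ p - Polynomial.X : Polynomial F).roots := by
    intro x hx
    rw [Polynomial.mem_roots (FiniteField.X_pow_card_sub_X_ne_zero F hp1)]
    exact hroot x hx
  have hcard := Polynomial.card_le_degree_of_subset_roots hsub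
  rw [Finset.card_insert_of_notMem hγs, Finset.card_image_of_injective _ hinj,
    Finset.card_univ, ZMod.card, FiniteField.X_pow_card_sub_X_natDegree_eq F hp1] at hcard
  omega

/-- A sequence with period `N` takes equal values on arguments congruent mod `N`. -/
lemma ntu5_congr {N : ℕ} (hN : 0 < N) (t : ℕ → ZMod 2) (hper : ∀ n, t (n + N) = t n)
    {x y : ℤ} (hx : 0 ≤ x) (hy : 0 ≤ y) (h : x % N = y % N) :
    t x.toNat = t y.toNat := by
  clear hN
  have hmul : ∀ k r : ℕ, t (r + N * k) = t r := by
    intro k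
    induction k with
    | zero => simp
    | succ k ih => intro r; rw [Nat.mul_succ, ← add_assoc, hper, ih]
  have hmod : ∀ a : ℕ, t a = t (a % N) := by
    intro a
    conv_lhs => rw [← Nat.mod_add_div a N]
    exact hmul (a / N) (a % N)
  rw [hmod x.toNat, hmod y.toNat]
  congr 1
  have : ((x.toNat % N : ℕ) : ℤ) = ((y.toNat % N : ℕ) : ℤ) := by
    push_cast
    rw [Int.toNat_of_nonneg hx, Int.toNat_of_nonneg hy, h]
  exact_mod_cast this

lemma ntu5_flip1 (x y : ZMod 2) :
    (-1 : ℤ) ^ ((x + (y + 1)).val) = -(-1 : ℤ) ^ ((x + y).val) := by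
  revert x y; decide

lemma ntu5_flip2 (x y : ZMod 2) :
    (-1 : ℤ) ^ (((x + 1) + y).val) = -(-1 : ℤ) ^ ((y + x).val) := by
  revert x y; decide

theorem stmt5 (p m : ℕ) [Fact p.Prime] (hp2 : p ≠ 2) (hm : 1 < m)
    (F : Type) [Field F] [Fintype F] [Algebra (ZMod p) F]
    (hcard : Fintype.card F = p ^ m) (ω : F) (hω : orderOf ω = p ^ m - 1)
    (N : ℕ) (hN : N = 2 * (p ^ m - 1) / (p - 1)) (e1 e2 : ℕ) (he1 : e1 < N) (he2 : e2 < N) (τ0 : ℤ) :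
    pcorr (2 * N) (ntuInterleave (ntuT1 p ω) (ntuT2 p ω) e1) (ntuInterleave (ntuT1 p ω) (ntuT2 p ω) e2) (2 * τ0 + 1)
      = - pcorr N (ntuT1 p ω) (ntuT1 p ω) ((e2 : ℤ) + τ0 + ((N / 2 : ℕ) : ℤ))
        - pcorr N (ntuT1 p ω) (ntuT1 p ω) ((e1 : ℤ) - τ0 - 1 + ((N / 2 : ℕ) : ℤ)) := by
  classical
  have hp : p.Prime := Fact.out
  have hp3 : 3 ≤ p := by have := hp.two_le; omega
  have hpm1 : 1 < p ^ m := Nat.one_lt_pow (by omega) (by omega)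
  set q : ℕ := (p ^ m - 1) / (p - 1) with hqdef
  have hdvd : p - 1 ∣ p ^ m - 1 := by simpa using Nat.sub_dvd_pow_sub_pow p 1 m
  have hqmul : q * (p - 1) = p ^ m - 1 := Nat.div_mul_cancel hdvd
  have hqpos : 0 < q := by
    rcases Nat.eq_zero_or_pos q with h | h
    · rw [h, zero_mul] at hqmul; omega
    · exact h
  have hNq : N = 2 * q := by rw [hN, Nat.mul_div_assoc 2 hdvd]
  have hNpos : 0 < N := by omega
  have hN2 : N / 2 = q := by omega
  have hNZ : (0 : ℤ) < (N : ℤ) := by exact_mod_cast hNpos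
  -- the primitive root γ = ω^q generating the prime field multiplicatively
  set γ : F := ω ^ q with hγdef
  have hωpow : ω ^ (p ^ m - 1) = 1 := by rw [← hω]; exact pow_orderOf_eq_one ω
  have hγp : γ ^ p = γ := by
    rw [hγdef, ← pow_mul, show q * p = q + q * (p - 1) by
      have h1 : p - 1 + 1 = p := by omega
      calc q * p = q * (p - 1 + 1) := by rw [h1]
        _ = q + q * (p - 1) := by ring,
      pow_add, hqmul, hωpow, mul_one]
  obtain ⟨c, hc⟩ := ntu5_mem_primeField p γ hγp
  have hinj : Function.Injective (algebraMap (ZMod p) F) := (algebraMap (ZMod p) F).injective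
  have hγord : orderOf γ = p - 1 := by
    rw [hγdef, orderOf_pow' ω (by omega : q ≠ 0), hω,
      Nat.gcd_eq_right ⟨p - 1, hqmul.symm⟩, ← hqmul, Nat.mul_div_cancel_left _ hqpos]
  have hcord : orderOf c = p - 1 := by
    have h := orderOf_injective (algebraMap (ZMod p) F).toMonoidHom hinj c
    simp only [RingHom.toMonoidHom_eq_coe, MonoidHom.coe_coe] at h
    rw [hc, hγord] at h
    exact h.symm
  have hcpow : c ^ (p - 1) = 1 := by rw [← hcord]; exact pow_orderOf_eq_one c
  have hc0 : c ≠ 0 := by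
    intro h
    rw [h, zero_pow (by omega : p - 1 ≠ 0)] at hcpow
    exact zero_ne_one hcpow
  have hodd : p % 2 = 1 := Nat.Prime.eq_two_or_odd hp |>.resolve_left hp2
  have hcns : ¬ IsSquare c := by
    rintro ⟨d, hd⟩
    have hd0 : d ≠ 0 := by rintro rfl; rw [mul_zero] at hd; exact hc0 hd
    have hdp : d ^ (p - 1) = 1 := ZMod.pow_card_sub_one_eq_one hd0
    have h2 : c ^ ((p - 1) / 2) = 1 := by
      rw [hd, ← pow_two, ← pow_mul, show 2 * ((p - 1) / 2) = p - 1 by omega, hdp]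
    have hdvd2 := orderOf_dvd_of_pow_eq_one h2
    rw [hcord] at hdvd2
    have := Nat.le_of_dvd (by omega) hdvd2
    omega
  have hχc : quadraticChar (ZMod p) c = -1 := quadraticChar_neg_one_iff_not_isSquare.mpr hcns
  -- trace twisting by the primitive root
  have htr : ∀ n : ℕ, Algebra.trace (ZMod p) F (ω ^ (n + q))
      = c * Algebra.trace (ZMod p) F (ω ^ n) := by
    intro n
    rw [pow_add, ← hγdef, ← hc, mul_comm, ← Algebra.smul_def, map_smul, smul_eq_mul]
  -- rewriting the sequences via the quadratic character
  have hleg : ∀ x : ZMod p, legendreSym p ((x.val : ℤ)) = quadraticChar (ZMod p) x := by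
    intro x
    rw [legendreSym]
    congr 1
    push_cast
    rw [ZMod.natCast_val, ZMod.cast_id]
  have ht1 : ∀ n : ℕ, ntuT1 p ω n
      = if quadraticChar (ZMod p) (Algebra.trace (ZMod p) F (ω ^ n)) = -1 then 1 else 0 := by
    intro n; rw [ntuT1, hleg]
  have ht2 : ∀ n : ℕ, ntuT2 p ω n
      = if quadraticChar (ZMod p) (Algebra.trace (ZMod p) F (ω ^ n)) = 1 then 0 else 1 := by
    intro n; rw [ntuT2, hleg]
  -- T2 is a shift of T1, up to adding 1
  have hA : ∀ n : ℕ, ntuT2 p ω n = ntuT1 p ω (n + q) + 1 := by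
    intro n
    have hcond : ((-1 : ℤ) * quadraticChar (ZMod p) (Algebra.trace (ZMod p) F (ω ^ n)) = -1)
        ↔ (quadraticChar (ZMod p) (Algebra.trace (ZMod p) F (ω ^ n)) = 1) := by
      constructor <;> intro hh <;> linarith
    rw [ht1, ht2, htr n, map_mul, hχc]
    by_cases h : quadraticChar (ZMod p) (Algebra.trace (ZMod p) F (ω ^ n)) = 1
    · rw [if_pos h, if_pos (hcond.mpr h)]; decide
    · rw [if_neg h, if_neg fun hh => h (hcond.mp hh)]; decide
  -- N-periodicity of T1
  have hB : ∀ n : ℕ, ntuT1 p ω (n + N) = ntuT1 p ω n := by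
    intro n
    rw [ht1, ht1, show n + N = n + q + q by omega, htr, htr, map_mul, map_mul, hχc]
    have : (-1 : ℤ) * ((-1) * quadraticChar (ZMod p) (Algebra.trace (ZMod p) F (ω ^ n)))
        = quadraticChar (ZMod p) (Algebra.trace (ZMod p) F (ω ^ n)) := by ring
    rw [this]
  -- now the combinatorial part
  rw [hN2]
  set t1 : ℕ → ZMod 2 := ntuT1 p ω with ht1def
  set t2 : ℕ → ZMod 2 := ntuT2 p ω with ht2def
  set S1 : ℕ → ZMod 2 := ntuInterleave t1 t2 e1 with hS1def
  set S2 : ℕ → ZMod 2 := ntuInterleave t1 t2 e2 with hS2def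
  have hunfold : pcorr (2 * N) S1 S2 (2 * τ0 + 1)
      = ∑ i ∈ Finset.range (2 * N),
          (fun i => (-1 : ℤ) ^ ((S1 i + S2 ((((i : ℤ) + (2 * τ0 + 1)) % ((2 * N : ℕ) : ℤ)).toNat)).val)) i :=
    rfl
  rw [hunfold, ntu5_sum_interleave]
  have heven : ∑ j ∈ Finset.range N,
      (fun i => (-1 : ℤ) ^ ((S1 i + S2 ((((i : ℤ) + (2 * τ0 + 1)) % ((2 * N : ℕ) : ℤ)).toNat)).val)) (2 * j)
      = - pcorr N t1 t1 ((e2 : ℤ) + τ0 + (q : ℤ)) := by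
    rw [pcorr, ← Finset.sum_neg_distrib]
    apply Finset.sum_congr rfl
    intro j hj
    have hjN : j < N := Finset.mem_range.mp hj
    simp only []
    obtain ⟨r, hr0, hrN, hr⟩ : ∃ r : ℤ, 0 ≤ r ∧ r < (N : ℤ) ∧ ((j : ℤ) + τ0) % (N : ℤ) = r :=
      ⟨_, Int.emod_nonneg _ hNZ.ne', Int.emod_lt_of_pos _ hNZ, rfl⟩
    have hX : (((2 * j : ℕ) : ℤ) + (2 * τ0 + 1)) % ((2 * N : ℕ) : ℤ) = 2 * r + 1 := by
      push_cast
      have hdm := Int.mul_ediv_add_emod ((j : ℤ) + τ0) (N : ℤ)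
      rw [hr] at hdm
      have hrw : (2 * (j : ℤ) + (2 * τ0 + 1))
          = (2 * r + 1) + (2 * (N : ℤ)) * (((j : ℤ) + τ0) / (N : ℤ)) := by linarith
      rw [hrw, Int.add_mul_emod_self_left]
      exact Int.emod_eq_of_lt (by omega) (by omega)
    have hXnat : ((((2 * j : ℕ) : ℤ) + (2 * τ0 + 1)) % ((2 * N : ℕ) : ℤ)).toNat
        = 2 * r.toNat + 1 := by rw [hX]; omega
    have hS1v : S1 (2 * j) = t1 j := by
      rw [hS1def, ntuInterleave, if_pos (by omega : (2 * j) % 2 = 0),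
        (by omega : (2 * j) / 2 = j)]
    have hS2v : S2 (2 * r.toNat + 1) = t2 (r.toNat + e2) := by
      rw [hS2def, ntuInterleave, if_neg (by omega : ¬((2 * r.toNat + 1) % 2 = 0)),
        (by omega : (2 * r.toNat + 1) / 2 = r.toNat)]
    rw [hXnat, hS1v, hS2v, hA]
    have hT : t1 (r.toNat + e2 + q)
        = t1 (((((j : ℕ) : ℤ) + ((e2 : ℤ) + τ0 + (q : ℤ))) % (N : ℤ)).toNat) := by
      have hcg : (((r.toNat + e2 + q : ℕ) : ℤ)) % (N : ℤ)
          = ((((j : ℕ) : ℤ) + ((e2 : ℤ) + τ0 + (q : ℤ))) % (N : ℤ)) % (N : ℤ) := by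
        rw [Int.emod_emod_of_dvd _ dvd_rfl]
        push_cast
        rw [Int.toNat_of_nonneg hr0, ← hr, add_assoc, Int.emod_add_emod]
        congr 1
        ring
      have := ntu5_congr hNpos t1 hB (Int.natCast_nonneg (r.toNat + e2 + q))
        (Int.emod_nonneg _ hNZ.ne') hcg
      rwa [Int.toNat_natCast] at this
    rw [hT]
    exact ntu5_flip1 _ _
  have hoddsum : ∑ j ∈ Finset.range N,
      (fun i => (-1 : ℤ) ^ ((S1 i + S2 ((((i : ℤ) + (2 * τ0 + 1)) % ((2 * N : ℕ) : ℤ)).toNat)).val)) (2 * j + 1)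
      = - pcorr N t1 t1 ((e1 : ℤ) - τ0 - 1 + (q : ℤ)) := by
    rw [pcorr, ← Finset.sum_neg_distrib]
    apply Finset.sum_nbij' (i := fun j : ℕ => ((((j : ℤ) + τ0 + 1) % (N : ℤ)).toNat))
      (j := fun i : ℕ => ((((i : ℤ) - τ0 - 1) % (N : ℤ)).toNat))
    · intro a ha
      refine Finset.mem_range.mpr ?_
      have h1 := Int.emod_nonneg ((a : ℤ) + τ0 + 1) hNZ.ne'
      have h2 := Int.emod_lt_of_pos ((a : ℤ) + τ0 + 1) hNZ
      omega
    · intro a ha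
      refine Finset.mem_range.mpr ?_
      have h1 := Int.emod_nonneg ((a : ℤ) - τ0 - 1) hNZ.ne'
      have h2 := Int.emod_lt_of_pos ((a : ℤ) - τ0 - 1) hNZ
      omega
    · intro a ha
      have haN : a < N := Finset.mem_range.mp ha
      have h1 := Int.emod_nonneg ((a : ℤ) + τ0 + 1) hNZ.ne'
      have h2 : ((((((a : ℤ) + τ0 + 1) % (N : ℤ)).toNat : ℕ) : ℤ) - τ0 - 1) % (N : ℤ) = (a : ℤ) := by
        rw [Int.toNat_of_nonneg h1]
        have : (((a : ℤ) + τ0 + 1) % (N : ℤ)) - τ0 - 1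
            = (((a : ℤ) + τ0 + 1) % (N : ℤ)) + (- τ0 - 1) := by ring
        rw [this, Int.emod_add_emod]
        have : ((a : ℤ) + τ0 + 1) + (- τ0 - 1) = (a : ℤ) := by ring
        rw [this]
        exact Int.emod_eq_of_lt (by positivity) (by exact_mod_cast haN)
      rw [h2]
      exact Int.toNat_natCast a
    · intro a ha
      have haN : a < N := Finset.mem_range.mp ha
      have h1 := Int.emod_nonneg ((a : ℤ) - τ0 - 1) hNZ.ne'
      have h2 : ((((((a : ℤ) - τ0 - 1) % (N : ℤ)).toNat : ℕ) : ℤ) + τ0 + 1) % (N : ℤ) = (a : ℤ) := by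
        rw [Int.toNat_of_nonneg h1]
        have : (((a : ℤ) - τ0 - 1) % (N : ℤ)) + τ0 + 1
            = (((a : ℤ) - τ0 - 1) % (N : ℤ)) + (τ0 + 1) := by ring
        rw [this, Int.emod_add_emod]
        have : ((a : ℤ) - τ0 - 1) + (τ0 + 1) = (a : ℤ) := by ring
        rw [this]
        exact Int.emod_eq_of_lt (by positivity) (by exact_mod_cast haN)
      rw [h2]
      exact Int.toNat_natCast a
    · intro j hj
      have hjN : j < N := Finset.mem_range.mp hj
      simp only []
      obtain ⟨r, hr0, hrN, hr⟩ : ∃ r : ℤ, 0 ≤ r ∧ r < (N : ℤ) ∧ ((j : ℤ) + τ0 + 1) % (N : ℤ) = r :=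
        ⟨_, Int.emod_nonneg _ hNZ.ne', Int.emod_lt_of_pos _ hNZ, rfl⟩
      have hX : (((2 * j + 1 : ℕ) : ℤ) + (2 * τ0 + 1)) % ((2 * N : ℕ) : ℤ) = 2 * r := by
        push_cast
        have hdm := Int.mul_ediv_add_emod ((j : ℤ) + τ0 + 1) (N : ℤ)
        rw [hr] at hdm
        have hrw : (2 * (j : ℤ) + 1 + (2 * τ0 + 1))
            = (2 * r) + (2 * (N : ℤ)) * (((j : ℤ) + τ0 + 1) / (N : ℤ)) := by linarith
        rw [hrw, Int.add_mul_emod_self_left]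
        exact Int.emod_eq_of_lt (by omega) (by omega)
      have hXnat : ((((2 * j + 1 : ℕ) : ℤ) + (2 * τ0 + 1)) % ((2 * N : ℕ) : ℤ)).toNat
          = 2 * r.toNat := by rw [hX]; omega
      have hS1v : S1 (2 * j + 1) = t2 (j + e1) := by
        rw [hS1def, ntuInterleave, if_neg (by omega : ¬((2 * j + 1) % 2 = 0)),
          (by omega : (2 * j + 1) / 2 = j)]
      have hS2v : S2 (2 * r.toNat) = t1 r.toNat := by
        rw [hS2def, ntuInterleave, if_pos (by omega : (2 * r.toNat) % 2 = 0),
          (by omega : (2 * r.toNat) / 2 = r.toNat)]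
      rw [hXnat, hS1v, hS2v, hA]
      have hT : t1 (j + e1 + q)
          = t1 (((r + ((e1 : ℤ) - τ0 - 1 + (q : ℤ))) % (N : ℤ)).toNat) := by
        have hcg : (((j + e1 + q : ℕ) : ℤ)) % (N : ℤ)
            = ((r + ((e1 : ℤ) - τ0 - 1 + (q : ℤ))) % (N : ℤ)) % (N : ℤ) := by
          rw [Int.emod_emod_of_dvd _ dvd_rfl, ← hr, Int.emod_add_emod]
          push_cast
          congr 1
          ring
        have := ntu5_congr hNpos t1 hB (Int.natCast_nonneg (j + e1 + q))
          (Int.emod_nonneg _ hNZ.ne') hcg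
        rwa [Int.toNat_natCast] at this
      rw [hT, hr, Int.toNat_of_nonneg hr0]
      exact ntu5_flip2 _ _
  rw [heven, hoddsum]
  ring
end

section
/- Let e ∈ {0, 1, …, N−1}. For every even shift τ = 2τ0 with 0 ≤ τ0 ≤ N−1, the periodic autocorrelation of the interleaved sequence S^e satisfies: R_{S^e}(2τ0) = 2N if τ0 = 0; R_{S^e}(2τ0) = 2N1 if τ0 = N/2; and R_{S^e}(2τ0) = 2N2 otherwise. -/
/-!
Write `χ` for the quadratic character of `𝔽_p` and `δ` for the indicator of `0`, both evaluated at
`Tr(ωⁿ)`. Then `(-1)^{t¹ₙ} = χ + δ` and `(-1)^{t²ₙ} = χ - δ`, so the even-shift autocorrelation of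
the interleaved sequence (where the shift `e` disappears by periodicity) is `2 ∑ⱼ (χχ' + δδ')`,
the primed values taken at `Tr(ωʲ⁺ᵗ)`. The element `ω^{N/2}` is the norm of `ω`, a generator of
`𝔽_p^×` and hence a non-square, so the summand is `N/2`-periodic and the sum becomes one over
`x ∈ 𝔽_{p^m}^×` of `χ(Tr x) χ(Tr xc) + δ(Tr x) δ(Tr xc)` with `c = ωᵗ`. For `c = 1` every term
is `1`; for `c = ω^{N/2} ∈ 𝔽_p` it is `2 δ(Tr x) - 1`; for any other `t` we have `c ∉ 𝔽_p`, so the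
map `x ↦ (Tr x, Tr xc)` onto `𝔽_p²` is surjective by nondegeneracy of the trace form, its fibres
all have `p^{m-2}` elements, and the character sums cancel.
-/

open Finset Function

namespace Function.Periodic

variable {M : Type*} {f : ℕ → M} {N : ℕ}

theorem sum_range_add_right [AddCancelCommMonoid M] (hf : Periodic f N) (e : ℕ) :
    ∑ j ∈ range N, f (j + e) = ∑ j ∈ range N, f j := by
  induction e with
  | zero => rfl
  | succ e ih =>
    rw [← ih]
    have h := (sum_range_succ' (fun j => f (j + e)) N).symm.trans
      (sum_range_succ (fun j => f (j + e)) N)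
    rw [zero_add, add_comm N, hf e] at h
    simpa only [add_right_comm _ 1 e, add_assoc] using add_right_cancel h

theorem sum_range_mul [AddCommMonoid M] (hf : Periodic f N) (k : ℕ) :
    ∑ j ∈ range (k * N), f j = k • ∑ j ∈ range N, f j := by
  induction k with
  | zero => simp
  | succ k ih =>
    rw [add_mul, one_mul, Finset.sum_range_add, ih, succ_nsmul]
    exact congrArg _ (sum_congr rfl fun j _ => by simpa [add_comm] using hf.nat_mul k j)

end Function.Periodic

theorem Finset.sum_range_two_mul {M : Type*} [AddCommMonoid M] (f : ℕ → M) (N : ℕ) :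
    ∑ i ∈ range (2 * N), f i = ∑ j ∈ range N, (f (2 * j) + f (2 * j + 1)) := by
  induction N with
  | zero => simp
  | succ N ih => rw [mul_add_one, sum_range_succ, sum_range_succ, sum_range_succ, ih, add_assoc]

theorem pcorr_natCast_of_periodic {N : ℕ} {s s' : ℕ → ZMod 2} (hs' : Periodic s' N) (τ : ℕ) :
    pcorr N s s' τ = ∑ i ∈ range N, (-1 : ℤ) ^ (s i + s' (i + τ)).val := by
  refine sum_congr rfl fun i _ => ?_
  rw [← Nat.cast_add, ← Int.natCast_mod, Int.toNat_natCast, hs'.map_mod_nat]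

section Interleave

variable {s u : ℕ → ZMod 2} {N : ℕ}

@[simp]
theorem ntuInterleave_two_mul (e j : ℕ) : ntuInterleave s u e (2 * j) = s j := by
  simp [ntuInterleave]

@[simp]
theorem ntuInterleave_two_mul_add_one (e j : ℕ) :
    ntuInterleave s u e (2 * j + 1) = u (j + e) := by
  simp [ntuInterleave, Nat.mul_add_div]

theorem periodic_ntuInterleave (hs : Periodic s N) (hu : Periodic u N) (e : ℕ) :
    Periodic (ntuInterleave s u e) (2 * N) := by
  intro n
  obtain ⟨j, rfl | rfl⟩ := Nat.even_or_odd' n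
  · rw [← mul_add, ntuInterleave_two_mul, ntuInterleave_two_mul, hs]
  · rw [add_right_comm, ← mul_add, ntuInterleave_two_mul_add_one,
      ntuInterleave_two_mul_add_one, add_right_comm, hu]

theorem pcorr_ntuInterleave_two_mul (hs : Periodic s N) (hu : Periodic u N) (e τ : ℕ) :
    pcorr (2 * N) (ntuInterleave s u e) (ntuInterleave s u e) (2 * (τ : ℤ)) =
      ∑ j ∈ range N, ((-1 : ℤ) ^ (s j + s (j + τ)).val + (-1 : ℤ) ^ (u j + u (j + τ)).val) := by
  have hτ : 2 * (τ : ℤ) = (2 * τ : ℕ) := by push_cast; rfl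
  have hshift : Periodic (fun j => (-1 : ℤ) ^ (u j + u (j + τ)).val) N := fun j => by
    simp only [add_right_comm j N τ, hu j, hu (j + τ)]
  rw [hτ, pcorr_natCast_of_periodic (periodic_ntuInterleave hs hu e), sum_range_two_mul,
    sum_add_distrib, sum_add_distrib, ← hshift.sum_range_add_right e]
  congr 1 <;> refine sum_congr rfl fun j _ => ?_
  · rw [← mul_add, ntuInterleave_two_mul, ntuInterleave_two_mul]
  · rw [add_right_comm, ← mul_add, ntuInterleave_two_mul_add_one, ntuInterleave_two_mul_add_one,
      add_right_comm j τ e]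

end Interleave

theorem AddMonoidHom.card_nsmul_sum_comp_of_surjective {V W M : Type*} [AddCommGroup V]
    [Fintype V] [AddCommGroup W] [Fintype W] [AddCommMonoid M] (f : V →+ W) (hf : Surjective f)
    (g : W → M) : Fintype.card W • ∑ x, g (f x) = Fintype.card V • ∑ y, g y := by
  classical
  have hfiber (y : W) : #{x | f x = y} = #{x | f x = 0} :=
    AddMonoidHom.card_fiber_eq_of_mem_range f (hf y) (hf 0)
  have hcard : Fintype.card V = Fintype.card W * #{x | f x = 0} := by
    rw [← card_univ, card_eq_sum_card_fiberwise (t := univ) (fun x _ => mem_univ (f x))]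
    simp [hfiber]
  rw [sum_comp, image_univ_of_surjective hf, hcard, mul_comm, mul_smul]
  simp only [hfiber, smul_sum, smul_comm (Fintype.card W)]

section TraceCharacter

variable {p : ℕ} [Fact p.Prime] {F : Type} [Field F] [Algebra (ZMod p) F]

local notation "χ" => quadraticChar (ZMod p)
local notation "Tr" => Algebra.trace (ZMod p) F

theorem legendreSym_val_eq_quadraticChar (x : ZMod p) : legendreSym p x.val = χ x := by
  rw [legendreSym, Int.cast_natCast, ZMod.natCast_val, ZMod.cast_id', id]

theorem quadraticChar_trichotomy (a : ZMod p) :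
    (a = 0 ∧ χ a = 0) ∨ (a ≠ 0 ∧ χ a = 1) ∨ (a ≠ 0 ∧ χ a = -1) := by
  by_cases ha : a = 0
  · exact .inl ⟨ha, ha ▸ quadraticChar_zero⟩
  · exact .inr ((quadraticChar_dichotomy ha).imp (⟨ha, ·⟩) (⟨ha, ·⟩))

theorem trace_algebraMap_mul (a : ZMod p) (x : F) :
    Tr (algebraMap (ZMod p) F a * x) = a * Tr x := by
  rw [← Algebra.smul_def, map_smul, smul_eq_mul]

theorem ntuT1_eq (ω : F) (n : ℕ) : ntuT1 p ω n = if χ (Tr (ω ^ n)) = -1 then 1 else 0 := by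
  rw [ntuT1, legendreSym_val_eq_quadraticChar]

theorem ntuT2_eq (ω : F) (n : ℕ) : ntuT2 p ω n = if χ (Tr (ω ^ n)) = 1 then 0 else 1 := by
  rw [ntuT2, legendreSym_val_eq_quadraticChar]

theorem quadraticChar_trace_pow_add {ω : F} {k : ℕ} {a : ZMod p}
    (h : ω ^ k = algebraMap (ZMod p) F a) (n : ℕ) :
    χ (Tr (ω ^ (n + k))) = χ a * χ (Tr (ω ^ n)) := by
  rw [pow_add, h, mul_comm, trace_algebraMap_mul, map_mul]

theorem periodic_ntuT1 {ω : F} {k : ℕ} {a : ZMod p} (h : ω ^ k = algebraMap (ZMod p) F a)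
    (ha : χ a = 1) : Periodic (ntuT1 p ω) k := fun n => by
  rw [ntuT1_eq, ntuT1_eq, quadraticChar_trace_pow_add h, ha, one_mul]

theorem periodic_ntuT2 {ω : F} {k : ℕ} {a : ZMod p} (h : ω ^ k = algebraMap (ZMod p) F a)
    (ha : χ a = 1) : Periodic (ntuT2 p ω) k := fun n => by
  rw [ntuT2_eq, ntuT2_eq, quadraticChar_trace_pow_add h, ha, one_mul]

variable (p) in
noncomputable def traceWeight (c x : F) : ℤ :=
  χ (Tr x) * χ (Tr (x * c)) + if Tr x = 0 ∧ Tr (x * c) = 0 then 1 else 0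

theorem neg_one_pow_ntuT_add (ω : F) (i τ : ℕ) :
    (-1 : ℤ) ^ (ntuT1 p ω i + ntuT1 p ω (i + τ)).val +
      (-1 : ℤ) ^ (ntuT2 p ω i + ntuT2 p ω (i + τ)).val = 2 * traceWeight p (ω ^ τ) (ω ^ i) := by
  have h2 : (1 + 1 : ZMod 2) = 0 := rfl
  rw [ntuT1_eq, ntuT1_eq, ntuT2_eq, ntuT2_eq, traceWeight, pow_add]
  rcases quadraticChar_trichotomy (Tr (ω ^ i)) with ⟨ha, ha'⟩ | ⟨ha, ha'⟩ | ⟨ha, ha'⟩ <;>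
  rcases quadraticChar_trichotomy (Tr (ω ^ i * ω ^ τ)) with ⟨hb, hb'⟩ | ⟨hb, hb'⟩ | ⟨hb, hb'⟩ <;>
  simp [ha, ha', hb, hb', h2, ZMod.val_one]

theorem traceWeight_mul_algebraMap (c x : F) {a : ZMod p} (ha : a ≠ 0) :
    traceWeight p c (x * algebraMap (ZMod p) F a) = traceWeight p c x := by
  have htr (y : F) : Tr (y * algebraMap (ZMod p) F a) = a * Tr y := by
    rw [mul_comm, trace_algebraMap_mul]
  simp only [traceWeight, mul_right_comm x _ c, htr, map_mul, mul_eq_zero, ha, false_or]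
  linear_combination χ (Tr x) * χ (Tr (x * c)) * quadraticChar_sq_one ha

theorem periodic_traceWeight_pow (c : F) {ω : F} {n : ℕ} {a : ZMod p}
    (h : ω ^ n = algebraMap (ZMod p) F a) (ha : a ≠ 0) :
    Periodic (fun j => traceWeight p c (ω ^ j)) n := fun j => by
  simp only [pow_add, h, traceWeight_mul_algebraMap c _ ha]

theorem traceWeight_zero_right (c : F) : traceWeight p c 0 = 1 := by
  simp [traceWeight]

theorem pcorr_ntuInterleave_ntuT {ω : F} {n : ℕ} {a : ZMod p} (ha : ω ^ n = algebraMap (ZMod p) F a)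
    (ha0 : a ≠ 0) (e τ : ℕ) :
    pcorr (2 * (2 * n)) (ntuInterleave (ntuT1 p ω) (ntuT2 p ω) e)
        (ntuInterleave (ntuT1 p ω) (ntuT2 p ω) e) (2 * (τ : ℤ)) =
      4 * ∑ j ∈ range n, traceWeight p (ω ^ τ) (ω ^ j) := by
  have h2n : ω ^ (2 * n) = algebraMap (ZMod p) F (a ^ 2) := by rw [mul_comm, pow_mul, ha, map_pow]
  have hsq : χ (a ^ 2) = 1 := quadraticChar_sq_one' ha0
  rw [pcorr_ntuInterleave_two_mul (periodic_ntuT1 h2n hsq) (periodic_ntuT2 h2n hsq),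
    sum_congr rfl fun j _ => neg_one_pow_ntuT_add ω j τ, ← mul_sum,
    (periodic_traceWeight_pow _ ha ha0).sum_range_mul, nsmul_eq_mul]
  push_cast
  ring

variable [Fintype F]

theorem ne_zero_of_orderOf_eq_card_sub_one {ω : F} (hω : orderOf ω = Fintype.card F - 1) :
    ω ≠ 0 := by
  rintro rfl
  have := Fintype.one_lt_card (α := F)
  rw [orderOf_zero] at hω
  omega

theorem sum_range_pow_add_apply_zero {M : Type*} [AddCommMonoid M] {ω : F}
    (hω : orderOf ω = Fintype.card F - 1) (g : F → M) :
    ∑ j ∈ range (Fintype.card F - 1), g (ω ^ j) + g 0 = ∑ x, g x := by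
  classical
  have hω0 := ne_zero_of_orderOf_eq_card_sub_one hω
  have himage : (range (Fintype.card F - 1)).image (ω ^ ·) = univ.erase 0 := by
    refine eq_of_subset_of_card_le (fun x hx => ?_) ?_
    · obtain ⟨j, -, rfl⟩ := mem_image.1 hx
      exact mem_erase.2 ⟨pow_ne_zero j hω0, mem_univ _⟩
    · rw [card_erase_of_mem (mem_univ 0), card_univ, card_image_of_injOn, card_range]
      exact hω ▸ (pow_injOn_Iio_orderOf).mono fun j hj => by simpa using hj
  rw [← sum_image (fun i hi j hj h => ?_), himage, sum_erase_add _ _ (mem_univ 0)]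
  exact pow_injOn_Iio_orderOf (by simpa [hω] using hi) (by simpa [hω] using hj) h

theorem sub_one_mul_sum_range_traceWeight {ω : F} (hω : orderOf ω = Fintype.card F - 1)
    {n : ℕ} (hn : Fintype.card F - 1 = (p - 1) * n) {a : ZMod p}
    (ha : ω ^ n = algebraMap (ZMod p) F a) (ha0 : a ≠ 0) (c : F) :
    ((p : ℤ) - 1) * ∑ j ∈ range n, traceWeight p c (ω ^ j) = ∑ x, traceWeight p c x - 1 := by
  have h := sum_range_pow_add_apply_zero hω (traceWeight p c)
  rw [hn, (periodic_traceWeight_pow c ha ha0).sum_range_mul, traceWeight_zero_right, nsmul_eq_mul,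
    Nat.cast_sub (Fact.out : p.Prime).one_le, Nat.cast_one] at h
  linarith

theorem sum_traceWeight_one : ∑ x : F, traceWeight p 1 x = Fintype.card F := by
  trans ∑ _x : F, (1 : ℤ)
  · refine sum_congr rfl fun x _ => ?_
    rcases quadraticChar_trichotomy (Tr x) with ⟨ha, ha'⟩ | ⟨ha, ha'⟩ | ⟨ha, ha'⟩ <;>
      simp [traceWeight, ha, ha']
  · simp

theorem card_mul_card_trace_eq_zero : p * #{x : F | Tr x = 0} = Fintype.card F := by
  have h := (Tr).toAddMonoidHom.card_nsmul_sum_comp_of_surjective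
    (Algebra.trace_surjective (ZMod p) F) fun z => if z = 0 then 1 else 0
  rwa [ZMod.card, smul_eq_mul, sum_boole, smul_eq_mul, sum_ite_eq', if_pos (mem_univ _),
    mul_one] at h

theorem sum_traceWeight_algebraMap {a : ZMod p} (ha : χ a = -1) :
    p * ∑ x : F, traceWeight p (algebraMap (ZMod p) F a) x = (2 - p) * Fintype.card F := by
  have ha0 : a ≠ 0 := fun h => by simp [h] at ha
  have hterm (x : F) :
      traceWeight p (algebraMap (ZMod p) F a) x = 2 * (if Tr x = 0 then 1 else 0) - 1 := by
    rw [traceWeight, mul_comm x, trace_algebraMap_mul, map_mul, ha]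
    rcases quadraticChar_trichotomy (Tr x) with ⟨hb, hb'⟩ | ⟨hb, hb'⟩ | ⟨hb, hb'⟩ <;>
      simp [hb, hb', ha0]
  have hcount : (p : ℤ) * #{x : F | Tr x = 0} = Fintype.card F :=
    mod_cast card_mul_card_trace_eq_zero
  simp only [hterm, sum_sub_distrib, ← mul_sum, sum_boole, sum_const, card_univ, nsmul_one]
  linear_combination 2 * hcount

theorem surjective_trace_prod_trace_mul_right {c : F}
    (hc : c ∉ Set.range (algebraMap (ZMod p) F)) :
    Surjective ((Tr).prod ((Tr) ∘ₗ LinearMap.mulRight (ZMod p) c)) := by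
  rw [← LinearMap.range_eq_top]
  by_contra hne
  obtain ⟨f, hf0, hle⟩ := Submodule.exists_le_ker_of_lt_top _ (lt_top_iff_ne_top.2 hne)
  have hf (u v : ZMod p) : f (u, v) = u * f (1, 0) + v * f (0, 1) := by
    rw [← smul_eq_mul, ← smul_eq_mul, ← map_smul, ← map_smul, ← map_add]
    simp
  have hzero : algebraMap (ZMod p) F (f (1, 0)) + algebraMap (ZMod p) F (f (0, 1)) * c = 0 := by
    refine (traceForm_nondegenerate (ZMod p) F).1 _ fun x => ?_
    have hx : f (Tr x, Tr (x * c)) = 0 := hle ⟨x, rfl⟩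
    rw [hf] at hx
    rw [Algebra.traceForm_apply, add_mul, map_add, trace_algebraMap_mul, mul_assoc, mul_comm c,
      trace_algebraMap_mul]
    linear_combination hx
  by_cases hb : f (0, 1) = 0
  · refine hf0 (LinearMap.ext fun ⟨u, v⟩ => ?_)
    rw [hb, map_zero, zero_mul, add_zero, map_eq_zero] at hzero
    rw [hf, hzero, hb, LinearMap.zero_apply, mul_zero, mul_zero, add_zero]
  · refine hc ⟨-(f (1, 0) / f (0, 1)), ?_⟩
    rw [map_neg, map_div₀, neg_eq_iff_eq_neg, div_eq_iff (by simpa using hb)]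
    linear_combination hzero

theorem sum_traceWeight_of_notMem_range (hp2 : p ≠ 2) {c : F}
    (hc : c ∉ Set.range (algebraMap (ZMod p) F)) :
    p ^ 2 * ∑ x : F, traceWeight p c x = Fintype.card F := by
  let w (y : ZMod p × ZMod p) : ℤ := χ y.1 * χ y.2 + if y.1 = 0 ∧ y.2 = 0 then 1 else 0
  have hχ : ∑ a : ZMod p, χ a = 0 := quadraticChar_sum_zero (by rwa [ZMod.ringChar_zmod_n])
  have hw : ∑ y, w y = 1 := by
    simp only [w, Fintype.sum_prod_type, sum_add_distrib, ← mul_sum, ← sum_mul, hχ, zero_mul,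
      zero_add, ite_and]
    simp
  have h := ((Tr).prod ((Tr) ∘ₗ LinearMap.mulRight (ZMod p) c)).toAddMonoidHom
    |>.card_nsmul_sum_comp_of_surjective (surjective_trace_prod_trace_mul_right hc) w
  rw [hw, Fintype.card_prod, ZMod.card, nsmul_eq_mul, nsmul_one] at h
  rw [sq]
  exact_mod_cast h

theorem exists_pow_eq_algebraMap_quadraticChar_eq_neg_one (hp2 : p ≠ 2) {ω : F}
    (hω : orderOf ω = Fintype.card F - 1) {n : ℕ} (hn : Fintype.card F - 1 = (p - 1) * n) :
    ∃ a : ZMod p, ω ^ n = algebraMap (ZMod p) F a ∧ χ a = -1 := by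
  have hp : p.Prime := Fact.out
  have hp3 : 2 < p := hp.two_le.lt_of_ne' hp2
  have hcard := Fintype.one_lt_card (α := F)
  have hn0 : n ≠ 0 := by rintro rfl; omega
  have hnorm : algebraMap (ZMod p) F (Algebra.norm (ZMod p) ω) = ω ^ n := by
    rw [FiniteField.algebraMap_norm_eq_pow, Nat.card_eq_fintype_card, Nat.card_zmod, hn,
      Nat.mul_div_cancel_left _ (by omega)]
  have hord : orderOf (Algebra.norm (ZMod p) ω) = p - 1 := by
    rw [← orderOf_injective (algebraMap (ZMod p) F).toMonoidHom (algebraMap (ZMod p) F).injective,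
      RingHom.toMonoidHom_eq_coe, MonoidHom.coe_coe, hnorm,
      orderOf_pow_of_dvd hn0 (hω ▸ hn ▸ dvd_mul_left n _), hω, hn, Nat.mul_div_cancel _ (by omega)]
  refine ⟨_, hnorm.symm, ?_⟩
  have ha0 : Algebra.norm (ZMod p) ω ≠ 0 := by
    rintro h
    rw [h, orderOf_zero] at hord
    omega
  rw [quadraticChar_neg_one_iff_not_isSquare, ZMod.euler_criterion p ha0]
  intro h
  have := Nat.le_of_dvd (Nat.div_pos hp.two_le two_pos) (hord ▸ orderOf_dvd_of_pow_eq_one h)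
  omega

theorem pow_notMem_range_algebraMap {ω : F} (hω : orderOf ω = Fintype.card F - 1) {n : ℕ}
    (hn : Fintype.card F - 1 = (p - 1) * n) {k : ℕ} (hk0 : k ≠ 0) (hkn : k ≠ n) (hk : k < 2 * n) :
    ω ^ k ∉ Set.range (algebraMap (ZMod p) F) := by
  have hp : p.Prime := Fact.out
  rintro ⟨z, hz⟩
  have hz0 : z ≠ 0 := by
    rintro rfl
    exact pow_ne_zero k (ne_zero_of_orderOf_eq_card_sub_one hω) (hz ▸ map_zero _)
  have h : ω ^ (k * (p - 1)) = 1 := by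
    rw [pow_mul, ← hz, ← map_pow, ZMod.pow_card_sub_one_eq_one hz0, map_one]
  have hdvd := orderOf_dvd_of_pow_eq_one h
  rw [hω, hn, mul_comm k] at hdvd
  obtain ⟨l, rfl⟩ := Nat.dvd_of_mul_dvd_mul_left (by have := hp.two_le; omega) hdvd
  have hl : l < 2 := Nat.lt_of_mul_lt_mul_left (a := n) (by omega)
  interval_cases l <;> simp_all

theorem four_mul_sum_range_traceWeight_one {ω : F} (hω : orderOf ω = Fintype.card F - 1)
    {n : ℕ} (hn : Fintype.card F - 1 = (p - 1) * n) {a : ZMod p}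
    (ha : ω ^ n = algebraMap (ZMod p) F a) (ha0 : a ≠ 0) :
    4 * ∑ j ∈ range n, traceWeight p 1 (ω ^ j) = 2 * ((2 * n : ℕ) : ℤ) := by
  have hp : p.Prime := Fact.out
  have hG := sub_one_mul_sum_range_traceWeight hω hn ha ha0 1
  zify [Fintype.card_pos (α := F), hp.one_le] at hn
  rw [sum_traceWeight_one, hn] at hG
  rw [mul_left_cancel₀ (by have := hp.two_le; omega) hG]
  push_cast
  ring

theorem four_mul_sum_range_traceWeight_algebraMap {m : ℕ} (hm : 1 ≤ m)
    (hcard : Fintype.card F = p ^ m) {ω : F} (hω : orderOf ω = Fintype.card F - 1) {n : ℕ}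
    (hn : Fintype.card F - 1 = (p - 1) * n) {a : ZMod p} (ha : ω ^ n = algebraMap (ZMod p) F a)
    (hχa : χ a = -1) :
    4 * ∑ j ∈ range n, traceWeight p (algebraMap (ZMod p) F a) (ω ^ j) =
      2 * (-2 * (p : ℤ) ^ (m - 1) + 2 * ((p : ℤ) ^ (m - 1) - 1) / ((p : ℤ) - 1)) := by
  have hp : p.Prime := Fact.out
  have hp1 : (p : ℤ) - 1 ≠ 0 := by have := hp.two_le; omega
  have hG := sub_one_mul_sum_range_traceWeight hω hn ha (fun h => by simp [h] at hχa)
    (algebraMap (ZMod p) F a)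
  have hS : ∑ x, traceWeight p (algebraMap (ZMod p) F a) x = (2 - p) * (p : ℤ) ^ (m - 1) :=
    mul_left_cancel₀ (Nat.cast_ne_zero.2 hp.ne_zero) <| by
      rw [sum_traceWeight_algebraMap hχa, hcard, Nat.cast_pow, ← pow_sub_one_mul (by omega)]
      ring
  set G := ∑ j ∈ range n, traceWeight p (algebraMap (ZMod p) F a) (ω ^ j)
  have hdiv : 2 * ((p : ℤ) ^ (m - 1) - 1) = ((p : ℤ) - 1) * (2 * (G + (p : ℤ) ^ (m - 1))) := by
    linear_combination -2 * hG - 2 * hS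
  rw [hdiv, Int.mul_ediv_cancel_left _ hp1]
  ring

theorem four_mul_sum_range_traceWeight_of_notMem_range (hp2 : p ≠ 2) {m : ℕ} (hm : 2 ≤ m)
    (hcard : Fintype.card F = p ^ m) {ω : F} (hω : orderOf ω = Fintype.card F - 1) {n : ℕ}
    (hn : Fintype.card F - 1 = (p - 1) * n) {a : ZMod p} (ha : ω ^ n = algebraMap (ZMod p) F a)
    (ha0 : a ≠ 0) {c : F} (hc : c ∉ Set.range (algebraMap (ZMod p) F)) :
    4 * ∑ j ∈ range n, traceWeight p c (ω ^ j) =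
      2 * (2 * ((p : ℤ) ^ (m - 2) - 1) / ((p : ℤ) - 1)) := by
  have hp : p.Prime := Fact.out
  have hp1 : (p : ℤ) - 1 ≠ 0 := by have := hp.two_le; omega
  have hG := sub_one_mul_sum_range_traceWeight hω hn ha ha0 c
  have hS : ∑ x, traceWeight p c x = (p : ℤ) ^ (m - 2) :=
    mul_left_cancel₀ (pow_ne_zero 2 (Nat.cast_ne_zero.2 hp.ne_zero)) <| by
      rw [sum_traceWeight_of_notMem_range hp2 hc, hcard, Nat.cast_pow, ← pow_add,
        Nat.add_sub_cancel' hm]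
  have hdiv : 2 * ((p : ℤ) ^ (m - 2) - 1) =
      ((p : ℤ) - 1) * (2 * ∑ j ∈ range n, traceWeight p c (ω ^ j)) := by
    linear_combination -2 * hG - 2 * hS
  rw [hdiv, Int.mul_ediv_cancel_left _ hp1]
  ring

end TraceCharacter

theorem stmt6_general (p m : ℕ) [Fact p.Prime] (hp2 : p ≠ 2) (hm : 1 < m)
    (F : Type) [Field F] [Fintype F] [Algebra (ZMod p) F]
    (hcard : Fintype.card F = p ^ m) (ω : F) (hω : orderOf ω = p ^ m - 1)
    (N : ℕ) (hN : N = 2 * (p ^ m - 1) / (p - 1)) (N1 N2 : ℤ)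
    (hN1 : N1 = -2 * (p : ℤ) ^ (m - 1) + 2 * ((p : ℤ) ^ (m - 1) - 1) / ((p : ℤ) - 1))
    (hN2 : N2 = 2 * ((p : ℤ) ^ (m - 2) - 1) / ((p : ℤ) - 1))
    (e : ℕ) (τ0 : ℤ) (hτ0 : 0 ≤ τ0) (hτ1 : τ0 ≤ (N : ℤ) - 1) :
    pcorr (2 * N) (ntuInterleave (ntuT1 p ω) (ntuT2 p ω) e) (ntuInterleave (ntuT1 p ω) (ntuT2 p ω) e) (2 * τ0) =
      if τ0 = 0 then 2 * (N : ℤ)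
      else if τ0 = ((N / 2 : ℕ) : ℤ) then 2 * N1
      else 2 * N2 := by
  have hp : p.Prime := Fact.out
  obtain ⟨n, hn⟩ : p - 1 ∣ p ^ m - 1 := Nat.sub_one_dvd_pow_sub_one p m
  obtain rfl : N = 2 * n := by
    rw [hN, hn, mul_left_comm, Nat.mul_div_cancel_left _ (by have := hp.two_le; omega)]
  rw [← hcard] at hω hn
  obtain ⟨a, ha, hχa⟩ := exists_pow_eq_algebraMap_quadraticChar_eq_neg_one hp2 hω hn
  have ha0 : a ≠ 0 := fun h => by simp [h] at hχa
  lift τ0 to ℕ using hτ0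
  rw [pcorr_ntuInterleave_ntuT ha ha0]
  simp only [Nat.mul_div_cancel_left _ two_pos, Nat.cast_inj, Nat.cast_eq_zero]
  split_ifs with h0 hhalf
  · rw [h0, pow_zero]
    exact four_mul_sum_range_traceWeight_one hω hn ha ha0
  · rw [hhalf, ha, hN1]
    exact four_mul_sum_range_traceWeight_algebraMap hm.le hcard hω hn ha hχa
  · rw [hN2]
    exact four_mul_sum_range_traceWeight_of_notMem_range hp2 hm hcard hω hn ha ha0
      (pow_notMem_range_algebraMap hω hn h0 hhalf (by push_cast at hτ1; omega))

theorem stmt6 (p m : ℕ) [Fact p.Prime] (hp2 : p ≠ 2) (hm : 1 < m)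
    (F : Type) [Field F] [Fintype F] [Algebra (ZMod p) F]
    (hcard : Fintype.card F = p ^ m) (ω : F) (hω : orderOf ω = p ^ m - 1)
    (N : ℕ) (hN : N = 2 * (p ^ m - 1) / (p - 1)) (N1 N2 : ℤ)
    (hN1 : N1 = -2 * (p : ℤ) ^ (m - 1) + 2 * ((p : ℤ) ^ (m - 1) - 1) / ((p : ℤ) - 1))
    (hN2 : N2 = 2 * ((p : ℤ) ^ (m - 2) - 1) / ((p : ℤ) - 1))
    (e : ℕ) (he : e < N) (τ0 : ℤ) (hτ0 : 0 ≤ τ0) (hτ1 : τ0 ≤ (N : ℤ) - 1) :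
    pcorr (2 * N) (ntuInterleave (ntuT1 p ω) (ntuT2 p ω) e) (ntuInterleave (ntuT1 p ω) (ntuT2 p ω) e) (2 * τ0) =
      if τ0 = 0 then 2 * (N : ℤ)
      else if τ0 = ((N / 2 : ℕ) : ℤ) then 2 * N1
      else 2 * N2 :=
  stmt6_general p m hp2 hm F hcard ω hω N hN N1 N2 hN1 hN2 e τ0 hτ0 hτ1
end

section
/- Let e ∈ {0, 1, …, N−1} and suppose 2e ≢ 1 − N/2 (mod N). For every odd shift τ = 2τ0 + 1 with 0 ≤ τ0 ≤ N−1, the periodic autocorrelation of S^e satisfies: R_{S^e}(2τ0+1) = −N − N2 if τ0 ≡ −e − N/2 or τ0 ≡ e − 1 + N/2 (mod N); R_{S^e}(2τ0+1) = −N1 − N2 if τ0 ≡ −e or τ0 ≡ e − 1 (mod N); and R_{S^e}(2τ0+1) = −2N2 otherwise. -/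
/-!
At odd shifts, the even and the odd positions of the interleaved sequence each contribute a
cross-correlation of `T¹` and `T²`, at the shifts `τ₀ + e` and `e - 1 - τ₀`. These add up to
`2e - 1`, which is neither `0` nor `N/2` modulo `N`, so at most one of them is `≡ 0` or `≡ N/2`.

As `n` runs over a full period of `ω ^ n`, every residue mod `N` is hit `(p - 1)/2` times, so the
cross-correlation at shift `t` is the character sum `∑ₓ sign₁ (Tr x) * sign₂ (Tr (ω ^ t * x))`.
If `ω ^ t ∈ 𝔽_p`, i.e. `N/2 ∣ t` (`ω ^ (N/2)` is the norm of `ω`, a non-square generator of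
`𝔽_pˣ`), then `Tr (ω ^ t * x) = ω ^ t * Tr x` and the sum collapses to one over `𝔽_p`. Otherwise
`x ↦ (Tr x, Tr (ω ^ t * x))` maps `F` onto `𝔽_p²` with fibres of equal size, and the sum is a
multiple of `(∑ sign₁) * (∑ sign₂) = -1`.
-/

namespace GeometricSequence

open Finset Function

section QuadraticSigns

variable {K : Type*} [Field K] [Fintype K] [DecidableEq K]

def sign₁ (a : K) : ℤ := if quadraticChar K a = -1 then -1 else 1

def sign₂ (a : K) : ℤ := if quadraticChar K a = 1 then 1 else -1

lemma sign₁_eq (a : K) : sign₁ a = quadraticChar K a + if a = 0 then 1 else 0 := by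
  rcases eq_or_ne a 0 with rfl | ha
  · simp [sign₁]
  · rcases quadraticChar_dichotomy ha with h | h <;> simp [sign₁, h, ha]

lemma sign₂_eq (a : K) : sign₂ a = quadraticChar K a - if a = 0 then 1 else 0 := by
  rcases eq_or_ne a 0 with rfl | ha
  · simp [sign₂]
  · rcases quadraticChar_dichotomy ha with h | h <;> simp [sign₂, h, ha]

lemma sum_sign₁_mul_sign₂_mul {u : K} (hu : u ≠ 0) :
    ∑ a : K, sign₁ a * sign₂ (u * a) = (Fintype.card K - 1) * quadraticChar K u - 1 := by
  have hne : ∀ a ∈ univ.erase (0 : K), sign₁ a * sign₂ (u * a) = quadraticChar K u := by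
    intro a ha
    have ha : a ≠ 0 := ne_of_mem_erase ha
    have hsq : quadraticChar K a * quadraticChar K a = 1 := by
      rw [← map_mul, ← sq, quadraticChar_sq_one' ha]
    rw [sign₁_eq, sign₂_eq, map_mul, if_neg ha, if_neg (mul_ne_zero hu ha)]
    linear_combination quadraticChar K u * hsq
  rw [← sum_erase_add _ _ (mem_univ 0), sum_congr rfl hne, sum_const,
    card_erase_of_mem (mem_univ _), card_univ, nsmul_eq_mul, Nat.cast_pred Fintype.card_pos,
    mul_zero]
  have h0 : sign₁ (0 : K) * sign₂ (0 : K) = -1 := by simp [sign₁, sign₂]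
  rw [h0]; ring

lemma sum_sign₁ (hK : ringChar K ≠ 2) : ∑ a : K, sign₁ a = 1 := by
  simp only [sign₁_eq, sum_add_distrib, quadraticChar_sum_zero hK, sum_ite_eq', mem_univ, if_true,
    zero_add]

lemma sum_sign₂ (hK : ringChar K ≠ 2) : ∑ a : K, sign₂ a = -1 := by
  simp only [sign₂_eq, sum_sub_distrib, quadraticChar_sum_zero hK, sum_ite_eq', mem_univ, if_true,
    zero_sub]

end QuadraticSigns

lemma card_nsmul_sum_comp_of_surjective {G H M : Type*} [AddGroup G] [Fintype G] [AddMonoid H]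
    [Fintype H] [AddCommMonoid M] (φ : G →+ H) (hφ : Surjective φ) (h : H → M) :
    Fintype.card H • ∑ g, h (φ g) = Fintype.card G • ∑ x, h x := by
  classical
  set k := #{g | φ g = 0}
  have hfib : ∀ x, #{g | φ g = x} = k := fun x =>
    AddMonoidHom.card_fiber_eq_of_mem_range φ (hφ x) (hφ 0)
  have hG : Fintype.card G = Fintype.card H * k := by
    rw [← card_univ, card_eq_sum_card_fiberwise (f := φ) (t := univ) (fun _ _ => mem_univ _)]
    simp [hfib]
  have hsum : ∑ g, h (φ g) = k • ∑ x, h x := by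
    rw [← sum_fiberwise univ φ (fun g => h (φ g)), smul_sum]
    refine sum_congr rfl fun x _ => ?_
    rw [sum_congr rfl fun g hg => by rw [(mem_filter.mp hg).2], sum_const, hfib]
  rw [hsum, hG, smul_smul]

lemma trace_algebraMap_mul {K L : Type*} [CommRing K] [CommRing L] [Algebra K L] (u : K) (x : L) :
    Algebra.trace K L (algebraMap K L u * x) = u * Algebra.trace K L x := by
  rw [← Algebra.smul_def, map_smul, smul_eq_mul]

section Trace

variable {K L : Type*} [Field K] [Fintype K] [Field L] [Fintype L] [Algebra K L]

local notation "Tr" => Algebra.trace K L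

lemma card_nsmul_sum_trace {M : Type*} [AddCommMonoid M] (h : K → M) :
    Fintype.card K • ∑ x : L, h (Tr x) = Fintype.card L • ∑ a, h a :=
  card_nsmul_sum_comp_of_surjective (Tr).toAddMonoidHom (Algebra.trace_surjective K L) h

lemma exists_trace_eq_one : ∃ x : L, Tr x = 1 := Algebra.trace_surjective K L 1

lemma eq_zero_of_forall_trace_mul_eq_zero {d : L} (hd : ∀ x, Tr (d * x) = 0) : d = 0 := by
  by_contra h
  obtain ⟨x, hx⟩ := exists_trace_eq_one (K := K) (L := L)
  simpa [← mul_assoc, mul_inv_cancel₀ h, hx] using hd (d⁻¹ * x)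

lemma exists_trace_eq_zero_trace_mul_ne_zero {c : L} (hc : c ∉ Set.range (algebraMap K L)) :
    ∃ y : L, Tr y = 0 ∧ Tr (c * y) ≠ 0 := by
  -- otherwise `Tr (c * ·) = Tr (c * x₁) • Tr`, so `c = Tr (c * x₁)` by nondegeneracy
  by_contra! h
  obtain ⟨x₁, hx₁⟩ := exists_trace_eq_one (K := K) (L := L)
  refine hc ⟨Tr (c * x₁), (sub_eq_zero.mp ?_).symm⟩
  refine eq_zero_of_forall_trace_mul_eq_zero (K := K) fun x => ?_
  have := h (x - Tr x • x₁) (by simp [hx₁])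
  rw [mul_sub, mul_smul_comm, map_sub, map_smul, sub_eq_zero] at this
  rw [sub_mul, map_sub, this, ← Algebra.smul_def, map_smul, smul_eq_mul, smul_eq_mul, mul_comm,
    sub_self]

noncomputable def tracePair (c : L) : L →ₗ[K] K × K := (Tr).prod ((Tr).comp (LinearMap.mulLeft K c))

lemma tracePair_surjective {c : L} (hc : c ∉ Set.range (algebraMap K L)) :
    Surjective (tracePair (K := K) c) := by
  obtain ⟨x₁, hx₁⟩ := exists_trace_eq_one (K := K) (L := L)
  obtain ⟨y, hy, hcy⟩ := exists_trace_eq_zero_trace_mul_ne_zero hc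
  rintro ⟨a, b⟩
  refine ⟨a • x₁ + ((b - a * Tr (c * x₁)) / Tr (c * y)) • y, ?_⟩
  simp [tracePair, hx₁, hy, mul_add, div_mul_cancel₀ _ hcy]

lemma card_sq_nsmul_sum_trace_trace_mul {M : Type*} [AddCommMonoid M] {c : L}
    (hc : c ∉ Set.range (algebraMap K L)) (h : K → K → M) :
    Fintype.card K ^ 2 • ∑ x : L, h (Tr x) (Tr (c * x)) = Fintype.card L • ∑ a, ∑ b, h a b := by
  have := card_nsmul_sum_comp_of_surjective (tracePair (K := K) c).toAddMonoidHom
    (tracePair_surjective hc) (fun w => h w.1 w.2)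
  rw [Fintype.card_prod, ← sq, Fintype.sum_prod_type] at this
  exact this

variable [DecidableEq K]

lemma card_mul_sum_sign_trace_algebraMap_mul {u : K} (hu : u ≠ 0) :
    (Fintype.card K : ℤ) * ∑ x : L, sign₁ (Tr x) * sign₂ (Tr (algebraMap K L u * x)) =
      Fintype.card L * ((Fintype.card K - 1) * quadraticChar K u - 1) := by
  simp_rw [trace_algebraMap_mul]
  have := card_nsmul_sum_trace (L := L) fun a => sign₁ a * sign₂ (u * a)
  rw [nsmul_eq_mul, nsmul_eq_mul, sum_sign₁_mul_sign₂_mul hu] at this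
  exact this

lemma card_sq_mul_sum_sign_trace_mul (hK : ringChar K ≠ 2) {c : L}
    (hc : c ∉ Set.range (algebraMap K L)) :
    (Fintype.card K : ℤ) ^ 2 * ∑ x : L, sign₁ (Tr x) * sign₂ (Tr (c * x)) = -Fintype.card L := by
  have := card_sq_nsmul_sum_trace_trace_mul hc fun a b => sign₁ a * sign₂ b
  rw [← sum_mul_sum, sum_sign₁ hK, sum_sign₂ hK, nsmul_eq_mul, nsmul_eq_mul] at this
  push_cast at this
  linarith

end Trace

def halfPeriod (K L : Type*) [Fintype K] [Fintype L] : ℕ :=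
  (Fintype.card L - 1) / (Fintype.card K - 1)

section PrimitiveElement

variable {K L : Type*} [Field K] [Field L] [Fintype L] [Algebra K L] {ω : L}

lemma ne_zero_of_orderOf_eq (hω : orderOf ω = Fintype.card L - 1) : ω ≠ 0 := by
  rintro rfl
  rw [orderOf_eq_zero_iff'.mpr fun n hn => by simp [hn.ne']] at hω
  have := Fintype.one_lt_card (α := L)
  omega

variable (K) in
lemma norm_ne_zero_of_orderOf_eq (hω : orderOf ω = Fintype.card L - 1) : Algebra.norm K ω ≠ 0 :=
  Algebra.norm_ne_zero_iff.mpr (ne_zero_of_orderOf_eq hω)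

variable [Fintype K]

lemma card_sub_one_dvd_card_sub_one : Fintype.card K - 1 ∣ Fintype.card L - 1 := by
  rw [Module.card_eq_pow_finrank (K := K) (V := L)]
  simpa using Nat.sub_dvd_pow_sub_pow (Fintype.card K) 1 (Module.finrank K L)

lemma card_sub_one_mul_halfPeriod : (Fintype.card K - 1) * halfPeriod K L = Fintype.card L - 1 :=
  Nat.mul_div_cancel' card_sub_one_dvd_card_sub_one

lemma halfPeriod_pos : 0 < halfPeriod K L := by
  have hmul := card_sub_one_mul_halfPeriod (K := K) (L := L)
  have := Fintype.one_lt_card (α := L)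
  exact Nat.pos_of_ne_zero fun h => by rw [h, mul_zero] at hmul; omega

variable (K) in
lemma algebraMap_norm_eq_pow_halfPeriod (x : L) :
    algebraMap K L (Algebra.norm K x) = x ^ halfPeriod K L := by
  rw [FiniteField.algebraMap_norm_eq_pow, Nat.card_eq_fintype_card, Nat.card_eq_fintype_card,
    halfPeriod]

lemma orderOf_norm (hω : orderOf ω = Fintype.card L - 1) :
    orderOf (Algebra.norm K ω) = Fintype.card K - 1 := by
  have hmul := card_sub_one_mul_halfPeriod (K := K) (L := L)
  rw [← orderOf_injective (algebraMap K L).toMonoidHom (algebraMap K L).injective,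
    RingHom.toMonoidHom_eq_coe, MonoidHom.coe_coe, algebraMap_norm_eq_pow_halfPeriod,
    orderOf_pow_of_dvd halfPeriod_pos.ne' (by rw [hω, ← hmul]; exact dvd_mul_left _ _), hω, ← hmul,
    Nat.mul_div_cancel _ halfPeriod_pos]

lemma quadraticChar_norm [DecidableEq K] (hK : ringChar K ≠ 2)
    (hω : orderOf ω = Fintype.card L - 1) :
    quadraticChar K (Algebra.norm K ω) = -1 := by
  rw [quadraticChar_neg_one_iff_not_isSquare,
    FiniteField.isSquare_iff hK (norm_ne_zero_of_orderOf_eq K hω)]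
  have := Fintype.one_lt_card (α := K)
  have hodd : Fintype.card K % 2 = 1 := FiniteField.odd_card_of_char_ne_two hK
  exact pow_ne_one_of_lt_orderOf (by omega) (by rw [orderOf_norm hω]; omega)

lemma halfPeriod_dvd_of_pow_mem_range (hω : orderOf ω = Fintype.card L - 1) {t : ℕ}
    (ht : ω ^ t ∈ Set.range (algebraMap K L)) : halfPeriod K L ∣ t := by
  obtain ⟨u, hu⟩ := ht
  have hu0 : u ≠ 0 := by
    rintro rfl
    exact pow_ne_zero t (ne_zero_of_orderOf_eq hω) (by simpa using hu.symm)
  have h1 : ω ^ (t * (Fintype.card K - 1)) = 1 := by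
    rw [pow_mul, ← hu, ← map_pow, FiniteField.pow_card_sub_one_eq_one u hu0, map_one]
  have h2 := orderOf_dvd_of_pow_eq_one h1
  rw [hω, ← card_sub_one_mul_halfPeriod (K := K), mul_comm] at h2
  exact Nat.dvd_of_mul_dvd_mul_right (by have := Fintype.one_lt_card (α := K); omega) h2

lemma sum_range_pow_eq_sum_erase_zero {M : Type*} [AddCommMonoid M] [DecidableEq L]
    (hω : orderOf ω = Fintype.card L - 1) (h : L → M) :
    ∑ i ∈ range (Fintype.card L - 1), h (ω ^ i) = ∑ x ∈ univ.erase 0, h x := by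
  have hprim : IsPrimitiveRoot ω (Fintype.card L - 1) := hω ▸ IsPrimitiveRoot.orderOf ω
  have : NeZero (Fintype.card L - 1) := ⟨by have := Fintype.one_lt_card (α := L); omega⟩
  refine sum_nbij (ω ^ ·) (fun i _ => mem_erase.mpr ⟨pow_ne_zero _ (ne_zero_of_orderOf_eq hω),
    mem_univ _⟩) (fun i hi j hj hij => hprim.pow_inj (mem_range.mp hi) (mem_range.mp hj) hij)
    (fun x hx => ?_) fun _ _ => rfl
  obtain ⟨i, hi, rfl⟩ := hprim.eq_pow_of_pow_eq_one
    (FiniteField.pow_card_sub_one_eq_one x (ne_of_mem_erase hx))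
  exact ⟨i, mem_range.mpr hi, rfl⟩

end PrimitiveElement

section TraceSequences

variable {p : ℕ} [Fact p.Prime] {F : Type} [Field F] [Algebra (ZMod p) F] {ω : F}

local notation "Tr" => Algebra.trace (ZMod p) F

lemma legendreSym_val (a : ZMod p) : legendreSym p a.val = quadraticChar (ZMod p) a := by
  rw [legendreSym, Int.cast_natCast, ZMod.natCast_zmod_val]

lemma neg_one_pow_ntuT1 (n : ℕ) : (-1 : ℤ) ^ (ntuT1 p ω n).val = sign₁ (Tr (ω ^ n)) := by
  rw [ntuT1, legendreSym_val, sign₁]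
  split_ifs <;> rfl

lemma neg_one_pow_ntuT2 (n : ℕ) : (-1 : ℤ) ^ (ntuT2 p ω n).val = sign₂ (Tr (ω ^ n)) := by
  rw [ntuT2, legendreSym_val, sign₂]
  split_ifs <;> rfl

variable [Fintype F]

lemma quadraticChar_trace_pow_add_period (hω : orderOf ω = Fintype.card F - 1) (n : ℕ) :
    quadraticChar (ZMod p) (Tr (ω ^ (n + 2 * halfPeriod (ZMod p) F))) =
      quadraticChar (ZMod p) (Tr (ω ^ n)) := by
  rw [pow_add, mul_comm, pow_mul', ← algebraMap_norm_eq_pow_halfPeriod, ← map_pow,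
    trace_algebraMap_mul, map_mul, quadraticChar_sq_one' (norm_ne_zero_of_orderOf_eq _ hω), one_mul]

variable (p) in
lemma ntuT1_periodic (hω : orderOf ω = Fintype.card F - 1) :
    Periodic (ntuT1 p ω) (2 * halfPeriod (ZMod p) F) := fun n => by
  simp only [ntuT1, legendreSym_val, quadraticChar_trace_pow_add_period hω]

variable (p) in
lemma ntuT2_periodic (hω : orderOf ω = Fintype.card F - 1) :
    Periodic (ntuT2 p ω) (2 * halfPeriod (ZMod p) F) := fun n => by
  simp only [ntuT2, legendreSym_val, quadraticChar_trace_pow_add_period hω]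

end TraceSequences

section Correlation

variable {α : Type*} {N : ℕ}

def extendMod (N : ℕ) (s : ℕ → α) (z : ℤ) : α := s (z % N).toNat

lemma neg_one_pow_val_add (a b : ZMod 2) :
    (-1 : ℤ) ^ (a + b).val = (-1) ^ a.val * (-1) ^ b.val := by
  revert a b
  decide

lemma pcorr_eq_sum_extendMod (s s' : ℕ → ZMod 2) (τ : ℤ) :
    pcorr N s s' τ = ∑ i ∈ range N, (-1 : ℤ) ^ (s i + extendMod N s' (i + τ)).val := rfl

lemma extendMod_periodic (s : ℕ → α) : Periodic (extendMod N s) N := fun z => by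
  simp [extendMod]

lemma extendMod_natCast {s : ℕ → α} (hs : Periodic s N) (n : ℕ) : extendMod N s n = s n := by
  rw [extendMod, ← Int.natCast_mod, Int.toNat_natCast, hs.map_mod_nat]

lemma extendMod_emod_add (s : ℕ → α) (z w : ℤ) :
    extendMod N s (z % N + w) = extendMod N s (z + w) := by
  rw [Int.emod_def, sub_add_eq_add_sub, mul_comm, ← smul_eq_mul,
    (extendMod_periodic s).sub_zsmul_eq]

lemma toNat_emod_lt (hN : 0 < N) (τ : ℤ) : (τ % N).toNat < N := by
  have := Int.emod_lt_of_pos τ (by omega : (0 : ℤ) < N)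
  omega

lemma intCast_eq_natCast_iff (hN : 0 < N) {b : ℕ} (hb : b < N) (τ : ℤ) :
    (τ : ZMod N) = b ↔ (τ % N).toNat = b := by
  have hτ : (τ : ZMod N) = ((τ % N).toNat : ZMod N) := by
    have h : ((τ % N).toNat : ℤ) = τ % N := Int.toNat_of_nonneg (Int.emod_nonneg _ (by omega))
    rw [← Int.cast_natCast, h, ZMod.intCast_mod]
  rw [hτ, ZMod.natCast_eq_natCast_iff', Nat.mod_eq_of_lt (toNat_emod_lt hN τ), Nat.mod_eq_of_lt hb]

lemma pcorr_eq_sum_add_toNat_emod (hN : 0 < N) {s s' : ℕ → ZMod 2} (hs' : Periodic s' N)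
    (τ : ℤ) :
    pcorr N s s' τ = ∑ i ∈ range N, (-1 : ℤ) ^ (s i + s' (i + (τ % N).toNat)).val := by
  rw [pcorr_eq_sum_extendMod]
  refine sum_congr rfl fun i _ => ?_
  rw [← extendMod_natCast hs', Nat.cast_add, Int.toNat_of_nonneg (Int.emod_nonneg _ (by omega)),
    add_comm (i : ℤ) (τ % N), extendMod_emod_add, add_comm (i : ℤ) τ]

variable {t u : ℕ → ZMod 2} {e : ℕ}

lemma ntuInterleave_two_mul (t u : ℕ → ZMod 2) (e j : ℕ) : ntuInterleave t u e (2 * j) = t j := by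
  simp [ntuInterleave]

lemma ntuInterleave_two_mul_add_one (t u : ℕ → ZMod 2) (e j : ℕ) :
    ntuInterleave t u e (2 * j + 1) = u (j + e) := by
  have h₁ : (2 * j + 1) % 2 = 1 := by omega
  have h₂ : (2 * j + 1) / 2 = j := by omega
  simp [ntuInterleave, h₁, h₂]

lemma extendMod_ntuInterleave_two_mul (hN : 0 < N) (z : ℤ) :
    extendMod (2 * N) (ntuInterleave t u e) (2 * z) = extendMod N t z := by
  have h : 2 * z % ((2 * N : ℕ) : ℤ) = ((2 * (z % N).toNat : ℕ) : ℤ) := by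
    push_cast
    rw [Int.toNat_of_nonneg (Int.emod_nonneg _ (by omega)), Int.mul_emod_mul_of_pos _ _ two_pos]
  rw [extendMod, h, Int.toNat_natCast, ntuInterleave_two_mul, extendMod]

lemma extendMod_ntuInterleave_two_mul_add_one (hN : 0 < N) (hu : Periodic u N) (z : ℤ) :
    extendMod (2 * N) (ntuInterleave t u e) (2 * z + 1) = extendMod N u (z + e) := by
  have hz : 0 ≤ z % N := Int.emod_nonneg _ (by omega)
  have h : (2 * z + 1) % ((2 * N : ℕ) : ℤ) = ((2 * (z % N).toNat + 1 : ℕ) : ℤ) := by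
    have hz' := Int.emod_lt_of_pos z (by omega : (0 : ℤ) < N)
    have hdiv : 2 * z + 1 = (2 * (z % N) + 1) + (2 * N) * (z / N) := by
      linear_combination -2 * Int.emod_add_mul_ediv z N
    push_cast
    rw [Int.toNat_of_nonneg hz, hdiv, Int.add_mul_emod_self_left, Int.emod_eq_of_lt (by omega)]
    omega
  rw [extendMod, h, Int.toNat_natCast, ntuInterleave_two_mul_add_one, ← extendMod_natCast hu]
  push_cast
  rw [Int.toNat_of_nonneg hz, extendMod_emod_add]

lemma sum_range_two_mul {M : Type*} [AddCommMonoid M] (f : ℕ → M) (n : ℕ) :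
    ∑ i ∈ range (2 * n), f i = ∑ j ∈ range n, (f (2 * j) + f (2 * j + 1)) := by
  induction n with
  | zero => simp
  | succ n ih =>
    rw [mul_add, mul_one, sum_range_succ, sum_range_succ, ih, sum_range_succ, add_assoc]

lemma sum_range_mul_of_periodic {M : Type*} [AddCommMonoid M] {f : ℕ → M} (hf : Periodic f N)
    (n : ℕ) : ∑ i ∈ range (n * N), f i = n • ∑ i ∈ range N, f i := by
  induction n with
  | zero => simp
  | succ n ih =>
    rw [add_mul, one_mul, sum_range_add, ih, succ_nsmul]
    congr 1
    exact sum_congr rfl fun x _ => by simpa [add_comm] using hf.nat_mul n x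

lemma sum_range_add_of_periodic {M : Type*} [AddCancelCommMonoid M] {f : ℤ → M}
    (hf : Periodic f N) (c : ℤ) : ∑ i ∈ range N, f (i + c) = ∑ i ∈ range N, f i := by
  have shift : ∀ g : ℤ → M, Periodic g N → ∑ i ∈ range N, g (i + 1) = ∑ i ∈ range N, g i := by
    intro g hg
    apply add_left_cancel (a := g 0)
    have h₁ := sum_range_succ' (fun i : ℕ => g i) N
    have h₂ := sum_range_succ (fun i : ℕ => g i) N
    push_cast at h₁ h₂
    rw [add_comm, ← h₁, h₂, add_comm, ← zero_add (N : ℤ), hg]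
  induction c using Int.induction_on with
  | zero => simp
  | succ c ih =>
    rw [← ih, ← shift _ (hf.add_const c)]
    simp only [add_assoc, add_comm (1 : ℤ)]
  | pred c ih =>
    rw [← ih, ← shift _ (hf.add_const (-c - 1))]
    simp only [add_assoc, add_sub_cancel]

theorem pcorr_ntuInterleave_two_mul_add_one (hN : 0 < N) (ht : Periodic t N) (hu : Periodic u N)
    (τ : ℤ) :
    pcorr (2 * N) (ntuInterleave t u e) (ntuInterleave t u e) (2 * τ + 1) =
      pcorr N t u (τ + e) + pcorr N t u (e - 1 - τ) := by
  set G : ℤ → ℤ := fun z => (-1) ^ (extendMod N t z + extendMod N u (z + (e - 1 - τ))).val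
  have hG : Periodic G N := fun z => by
    simp only [G, add_right_comm z (N : ℤ), extendMod_periodic _ _]
  have hodd : ∀ j : ℕ, (-1 : ℤ) ^ (ntuInterleave t u e (2 * j + 1) +
      extendMod (2 * N) (ntuInterleave t u e) ((2 * j + 1 : ℕ) + (2 * τ + 1))).val =
      G (j + (τ + 1)) := fun j => by
    rw [show ((2 * j + 1 : ℕ) : ℤ) + (2 * τ + 1) = 2 * (j + (τ + 1)) by push_cast; ring,
      extendMod_ntuInterleave_two_mul hN, ntuInterleave_two_mul_add_one, ← extendMod_natCast hu,
      add_comm]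
    simp only [G]
    congr 4
    push_cast
    ring
  rw [pcorr_eq_sum_extendMod, sum_range_two_mul, sum_add_distrib, sum_congr rfl fun j _ => hodd j,
    sum_range_add_of_periodic hG, pcorr_eq_sum_extendMod, pcorr_eq_sum_extendMod]
  congr 1
  · refine sum_congr rfl fun j _ => ?_
    rw [show ((2 * j : ℕ) : ℤ) + (2 * τ + 1) = 2 * (j + τ) + 1 by push_cast; ring,
      extendMod_ntuInterleave_two_mul_add_one hN hu, ntuInterleave_two_mul, add_assoc]
  · refine sum_congr rfl fun j _ => ?_
    simp only [G, extendMod_natCast ht]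

end Correlation

section CrossCorrelation

variable {p : ℕ} [Fact p.Prime] {F : Type} [Field F] [Fintype F] [Algebra (ZMod p) F] {ω : F}

local notation "Tr" => Algebra.trace (ZMod p) F

lemma sub_one_mul_pcorr_ntuT1_ntuT2 (hp : p ≠ 2) (hω : orderOf ω = Fintype.card F - 1) (τ : ℤ) :
    ((p : ℤ) - 1) * pcorr (2 * halfPeriod (ZMod p) F) (ntuT1 p ω) (ntuT2 p ω) τ =
      2 * (∑ x : F, sign₁ (Tr x) *
        sign₂ (Tr (ω ^ (τ % (2 * halfPeriod (ZMod p) F : ℕ)).toNat * x)) + 1) := by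
  classical
  have hT₁ := ntuT1_periodic p hω
  have hT₂ := ntuT2_periodic p hω
  have hcard := card_sub_one_mul_halfPeriod (K := ZMod p) (L := F)
  rw [ZMod.card] at hcard
  set N := 2 * halfPeriod (ZMod p) F
  have hN : 0 < N := Nat.mul_pos two_pos halfPeriod_pos
  rw [pcorr_eq_sum_add_toNat_emod hN hT₂]
  set t := (τ % N).toNat
  have hper : Periodic (fun i => (-1 : ℤ) ^ (ntuT1 p ω i + ntuT2 p ω (i + t)).val) N := fun i => by
    simp only [hT₁ i, add_right_comm i N t, hT₂ (i + t)]
  have hterm : ∀ i, (-1 : ℤ) ^ (ntuT1 p ω i + ntuT2 p ω (i + t)).val =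
      sign₁ (Tr (ω ^ i)) * sign₂ (Tr (ω ^ t * ω ^ i)) := fun i => by
    rw [neg_one_pow_val_add, neg_one_pow_ntuT1, neg_one_pow_ntuT2, pow_add, mul_comm (ω ^ i)]
  obtain ⟨r, hr⟩ : 2 ∣ p - 1 :=
    (Nat.Odd.sub_odd ((Fact.out : p.Prime).odd_of_ne_two hp) odd_one).two_dvd
  have hcount : r * N = Fintype.card F - 1 := by
    rw [← hcard, hr]
    ring
  have hp1 : (p : ℤ) - 1 = 2 * r := by have := (Fact.out : p.Prime).one_lt; omega
  have h₀ : sign₁ (Tr (0 : F)) * sign₂ (Tr (ω ^ t * 0)) = -1 := by simp [sign₁, sign₂]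
  rw [← sum_erase_add _ _ (mem_univ 0), ← sum_range_pow_eq_sum_erase_zero hω, ← hcount,
    ← sum_congr rfl fun i _ => hterm i, sum_range_mul_of_periodic hper, h₀, hp1, nsmul_eq_mul]
  ring

lemma sum_sign_trace_mul_pow (hp : p ≠ 2) {m : ℕ} (hm : 1 < m) (hcard : Fintype.card F = p ^ m)
    (hω : orderOf ω = Fintype.card F - 1) {t : ℕ} (ht : t < 2 * halfPeriod (ZMod p) F) :
    ∑ x : F, sign₁ (Tr x) * sign₂ (Tr (ω ^ t * x)) =
      if t = halfPeriod (ZMod p) F then -(p : ℤ) ^ m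
      else if t = 0 then (p : ℤ) ^ (m - 1) * (p - 2)
      else -(p : ℤ) ^ (m - 2) := by
  have hχ : ringChar (ZMod p) ≠ 2 := by rwa [ZMod.ringChar_zmod_n]
  have hp0 : (p : ℤ) ≠ 0 := by exact_mod_cast (Fact.out : p.Prime).ne_zero
  have hpow₁ : (p : ℤ) ^ m = p * p ^ (m - 1) := by rw [← pow_succ']; congr 1; omega
  have hpow₂ : (p : ℤ) ^ m = p ^ 2 * p ^ (m - 2) := by rw [← pow_add]; congr 1; omega
  split_ifs with hk h0
  · have h := card_mul_sum_sign_trace_algebraMap_mul (L := F)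
      (norm_ne_zero_of_orderOf_eq (ZMod p) hω)
    rw [algebraMap_norm_eq_pow_halfPeriod, ← hk, quadraticChar_norm hχ hω, ZMod.card, hcard,
      Nat.cast_pow] at h
    apply mul_left_cancel₀ hp0
    linear_combination h
  · have h := card_mul_sum_sign_trace_algebraMap_mul (L := F) (one_ne_zero (α := ZMod p))
    rw [map_one, ← pow_zero ω, ← h0, map_one, ZMod.card, hcard, Nat.cast_pow] at h
    apply mul_left_cancel₀ hp0
    linear_combination h + (p - 2) * hpow₁
  · have hc : ω ^ t ∉ Set.range (algebraMap (ZMod p) F) := fun h => by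
      obtain ⟨d, rfl⟩ := halfPeriod_dvd_of_pow_mem_range hω h
      rcases d with _ | _ | d
      · simp at h0
      · simp at hk
      · nlinarith
    have h := card_sq_mul_sum_sign_trace_mul hχ hc
    rw [ZMod.card, hcard, Nat.cast_pow] at h
    apply mul_left_cancel₀ (pow_ne_zero 2 hp0)
    linear_combination h - hpow₂

theorem pcorr_ntuT1_ntuT2 (hp : p ≠ 2) {m : ℕ} (hm : 1 < m) (hcard : Fintype.card F = p ^ m)
    (hω : orderOf ω = Fintype.card F - 1) (τ : ℤ) :
    pcorr (2 * halfPeriod (ZMod p) F) (ntuT1 p ω) (ntuT2 p ω) τ =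
      if (τ : ZMod (2 * halfPeriod (ZMod p) F)) = halfPeriod (ZMod p) F then
        -((2 * halfPeriod (ZMod p) F : ℕ) : ℤ)
      else if (τ : ZMod (2 * halfPeriod (ZMod p) F)) = 0 then
        -(-2 * (p : ℤ) ^ (m - 1) + 2 * ((p : ℤ) ^ (m - 1) - 1) / ((p : ℤ) - 1))
      else -(2 * ((p : ℤ) ^ (m - 2) - 1) / ((p : ℤ) - 1)) := by
  have hmul := card_sub_one_mul_halfPeriod (K := ZMod p) (L := F)
  rw [ZMod.card, hcard] at hmul
  have hp1 := (Fact.out : p.Prime).one_lt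
  zify [hp1.le, Nat.one_le_pow m p (by omega)] at hmul
  have key := sub_one_mul_pcorr_ntuT1_ntuT2 hp hω τ
  set k := halfPeriod (ZMod p) F
  have hN : 0 < 2 * k := Nat.mul_pos two_pos halfPeriod_pos
  rw [sum_sign_trace_mul_pow hp hm hcard hω (toNat_emod_lt hN τ)] at key
  have h₀ := intCast_eq_natCast_iff hN hN τ
  rw [Nat.cast_zero] at h₀
  simp only [intCast_eq_natCast_iff hN (show k < 2 * k by omega), h₀]
  have hdiv (j : ℕ) : ((p : ℤ) - 1) * (2 * ((p : ℤ) ^ j - 1) / ((p : ℤ) - 1)) = 2 * (p ^ j - 1) :=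
    Int.mul_ediv_cancel' (Dvd.dvd.mul_left (by simpa using sub_dvd_pow_sub_pow (p : ℤ) 1 j) 2)
  apply mul_left_cancel₀ (show (p : ℤ) - 1 ≠ 0 by omega)
  rw [key]
  split_ifs
  · push_cast
    linear_combination 2 * hmul
  · linear_combination hdiv (m - 1)
  · linear_combination hdiv (m - 2)

end CrossCorrelation

lemma two_mul_ne_one {n : ℕ} (hn : 2 ∣ n) (x : ZMod n) : 2 * x ≠ 1 := by
  intro h
  have h2 := congrArg (ZMod.castHom hn (ZMod 2)) h
  rw [map_mul, map_ofNat, map_one] at h2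
  exact absurd h2 (by generalize ZMod.castHom hn (ZMod 2) x = y; revert y; decide)

lemma ite_add_ite_eq {R M : Type*} [CommRing R] [DecidableEq R] [AddCommMonoid M] {k e τ : R}
    (hk : k + k = 0) (he₀ : 2 * e ≠ 1) (heₖ : ¬ 2 * e = 1 - k) (A B D : M) :
    ((if τ + e = k then A else if τ + e = 0 then B else D) +
      if e - 1 - τ = k then A else if e - 1 - τ = 0 then B else D) =
      if τ = -e - k ∨ τ = e - 1 + k then A + D
      else if τ = -e ∨ τ = e - 1 then B + D else D + D := by
  -- the two arguments add up to `2 * e - 1`, which is neither `0` nor `k`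
  split_ifs <;> grind [add_comm]

end GeometricSequence

open GeometricSequence

theorem stmt7_general (p m : ℕ) [Fact p.Prime] (hp2 : p ≠ 2) (hm : 1 < m)
    (F : Type) [Field F] [Fintype F] [Algebra (ZMod p) F]
    (hcard : Fintype.card F = p ^ m) (ω : F) (hω : orderOf ω = p ^ m - 1)
    (N : ℕ) (hN : N = 2 * (p ^ m - 1) / (p - 1)) (N1 N2 : ℤ)
    (hN1 : N1 = -2 * (p : ℤ) ^ (m - 1) + 2 * ((p : ℤ) ^ (m - 1) - 1) / ((p : ℤ) - 1))
    (hN2 : N2 = 2 * ((p : ℤ) ^ (m - 2) - 1) / ((p : ℤ) - 1))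
    (e : ℕ) (hcond : ¬ (2 * (e : ℤ) ≡ 1 - ((N / 2 : ℕ) : ℤ) [ZMOD (N : ℤ)]))
    (τ0 : ℤ) :
    pcorr (2 * N) (ntuInterleave (ntuT1 p ω) (ntuT2 p ω) e) (ntuInterleave (ntuT1 p ω) (ntuT2 p ω) e) (2 * τ0 + 1) =
      if τ0 ≡ -(e : ℤ) - ((N / 2 : ℕ) : ℤ) [ZMOD (N : ℤ)] ∨ τ0 ≡ (e : ℤ) - 1 + ((N / 2 : ℕ) : ℤ) [ZMOD (N : ℤ)] then
        -(N : ℤ) - N2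
      else if τ0 ≡ -(e : ℤ) [ZMOD (N : ℤ)] ∨ τ0 ≡ (e : ℤ) - 1 [ZMOD (N : ℤ)] then
        -N1 - N2
      else -2 * N2 := by
  rw [← hcard] at hω
  have hNk : N = 2 * halfPeriod (ZMod p) F := by
    rw [hN, halfPeriod, ZMod.card, hcard,
      Nat.mul_div_assoc _ (by simpa using Nat.sub_dvd_pow_sub_pow p 1 m)]
  subst hNk
  have hk : (2 * halfPeriod (ZMod p) F) / 2 = halfPeriod (ZMod p) F := by omega
  rw [hk] at hcond ⊢
  rw [pcorr_ntuInterleave_two_mul_add_one (Nat.mul_pos two_pos halfPeriod_pos)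
      (ntuT1_periodic p hω) (ntuT2_periodic p hω),
    pcorr_ntuT1_ntuT2 hp2 hm hcard hω, pcorr_ntuT1_ntuT2 hp2 hm hcard hω, ← hN1, ← hN2]
  simp only [← ZMod.intCast_eq_intCast_iff] at hcond ⊢
  push_cast at hcond ⊢
  rw [ite_add_ite_eq (by rw [← Nat.cast_add, ← two_mul, ZMod.natCast_self])
    (two_mul_ne_one (dvd_mul_right 2 _) _) hcond]
  split_ifs <;> ring

theorem stmt7 (p m : ℕ) [Fact p.Prime] (hp2 : p ≠ 2) (hm : 1 < m)
    (F : Type) [Field F] [Fintype F] [Algebra (ZMod p) F]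
    (hcard : Fintype.card F = p ^ m) (ω : F) (hω : orderOf ω = p ^ m - 1)
    (N : ℕ) (hN : N = 2 * (p ^ m - 1) / (p - 1)) (N1 N2 : ℤ)
    (hN1 : N1 = -2 * (p : ℤ) ^ (m - 1) + 2 * ((p : ℤ) ^ (m - 1) - 1) / ((p : ℤ) - 1))
    (hN2 : N2 = 2 * ((p : ℤ) ^ (m - 2) - 1) / ((p : ℤ) - 1))
    (e : ℕ) (he : e < N) (hcond : ¬ (2 * (e : ℤ) ≡ 1 - ((N / 2 : ℕ) : ℤ) [ZMOD (N : ℤ)]))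
    (τ0 : ℤ) (hτ0 : 0 ≤ τ0) (hτ1 : τ0 ≤ (N : ℤ) - 1) :
    pcorr (2 * N) (ntuInterleave (ntuT1 p ω) (ntuT2 p ω) e) (ntuInterleave (ntuT1 p ω) (ntuT2 p ω) e) (2 * τ0 + 1) =
      if τ0 ≡ -(e : ℤ) - ((N / 2 : ℕ) : ℤ) [ZMOD (N : ℤ)] ∨ τ0 ≡ (e : ℤ) - 1 + ((N / 2 : ℕ) : ℤ) [ZMOD (N : ℤ)] then
        -(N : ℤ) - N2
      else if τ0 ≡ -(e : ℤ) [ZMOD (N : ℤ)] ∨ τ0 ≡ (e : ℤ) - 1 [ZMOD (N : ℤ)] then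
        -N1 - N2
      else -2 * N2 :=
  stmt7_general p m hp2 hm F hcard ω hω N hN N1 N2 hN1 hN2 e hcond τ0
end
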